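/- arXiv:2509.11684 — 8 statements merged into one kernel-verified Lean document; each statement's English description precedes it below -/
import Mathlib

section
/- Let s ≥ 2, q = s−1, and let the node vector c ∈ ℝ^s have pairwise distinct entries (so that V_s is invertible). Let A, K, B₁, A₀ ∈ ℝ^{s×s} and a ∈ ℝ^s satisfy: (i) A·V_q − K·V_q·E_q = B₁·V_q·P_q^{-1}; (ii) Aᵀ·V_q + K·V_q·E_q = B₁ᵀ·V_q·P_q; (iii) V_qᵀ·B₁·V_q·P_q^{-1} = e₁e₁ᵀ; (iv) A₀·V_q = a·e₁ᵀ + K·V_q·E_q; (v) A₀ᵀ·V_q + K·V_q·E_q = B₁ᵀ·V_q·P_q. Then a = A₀·1, and there exists φ₀ ∈ ℝ^s such that A₀ = A + (V_s^{-T}e_s)·φ₀ᵀ and, for every j with 2 ≤ j ≤ q, Σ_{i=1}^s φ₀ᵢ c_i^{j−1} = −e_sᵀ·V_sᵀ·B₁·V_q·P_q^{-1}·e_j. -/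
open Matrix BigOperators

noncomputable section

/-- Vandermonde-type matrix `(V_r)_{i,j} = c_i^{j-1}` (0-indexed: `c i ^ j`). -/
def Vand (s : ℕ) (c : Fin s → ℝ) (r : ℕ) : Matrix (Fin s) (Fin r) ℝ :=
  fun i j => c i ^ (j : ℕ)

/-- Pascal matrix `(P_r)_{i,j} = binom (j-1) (i-1)` (0-indexed: `choose j i`). -/
def Pasc (r : ℕ) : Matrix (Fin r) (Fin r) ℝ :=
  fun i j => (Nat.choose (j : ℕ) (i : ℕ) : ℝ)

/-- Scaled shift matrix `(E_r)_{i,i+1} = i` (1-indexed), zero otherwise. -/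
def ShiftE (r : ℕ) : Matrix (Fin r) (Fin r) ℝ :=
  fun i j => if (j : ℕ) = (i : ℕ) + 1 then ((i : ℕ) + 1 : ℝ) else 0

lemma mul_vecMulVec_aux {l n m : Type*} [Fintype n] [Fintype l] [Fintype m]
    (M : Matrix l n ℝ) (x : n → ℝ) (y : m → ℝ) :
    M * vecMulVec x y = vecMulVec (M *ᵥ x) y := by
  ext i j
  simp [Matrix.mul_apply, vecMulVec_apply, mulVec, dotProduct, Finset.sum_mul, mul_assoc]

/-- rank-one representation of the starting coefficient matrix `A₀`
of a Peer triplet (`s = q + 1`, `q = s - 1`). -/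
theorem stmt0 (q : ℕ) (hq : 1 ≤ q) (c : Fin (q + 1) → ℝ) (hc : Function.Injective c)
    (A K B1 A0 : Matrix (Fin (q + 1)) (Fin (q + 1)) ℝ) (a : Fin (q + 1) → ℝ)
    (h1 : A * Vand (q + 1) c q - K * Vand (q + 1) c q * ShiftE q
        = B1 * Vand (q + 1) c q * (Pasc q)⁻¹)
    (h2 : Aᵀ * Vand (q + 1) c q + K * Vand (q + 1) c q * ShiftE q
        = B1ᵀ * Vand (q + 1) c q * Pasc q)
    (h3 : (Vand (q + 1) c q)ᵀ * B1 * Vand (q + 1) c q * (Pasc q)⁻¹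
        = vecMulVec (Pi.single (⟨0, hq⟩ : Fin q) 1) (Pi.single (⟨0, hq⟩ : Fin q) 1))
    (h4 : A0 * Vand (q + 1) c q
        = vecMulVec a (Pi.single (⟨0, hq⟩ : Fin q) 1) + K * Vand (q + 1) c q * ShiftE q)
    (h5 : A0ᵀ * Vand (q + 1) c q + K * Vand (q + 1) c q * ShiftE q
        = B1ᵀ * Vand (q + 1) c q * Pasc q) :
    a = A0 *ᵥ (fun _ => (1 : ℝ)) ∧
    ∃ φ0 : Fin (q + 1) → ℝ,
      A0 = A + vecMulVec (((Vand (q + 1) c (q + 1))ᵀ)⁻¹ *ᵥ Pi.single (Fin.last q) 1) φ0 ∧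
      ∀ j : Fin q, 1 ≤ (j : ℕ) →
        (∑ i, φ0 i * c i ^ (j : ℕ))
          = -(((Vand (q + 1) c (q + 1))ᵀ * B1 * Vand (q + 1) c q * (Pasc q)⁻¹)
              (Fin.last q) j) := by
  set V : Matrix (Fin (q + 1)) (Fin (q + 1)) ℝ := Vand (q + 1) c (q + 1) with hVdef
  set Vq : Matrix (Fin (q + 1)) (Fin q) ℝ := Vand (q + 1) c q with hVqdef
  -- V is invertible
  have hdet : IsUnit V.det := by
    have hV : V = Matrix.vandermonde c := rfl
    rw [hV, isUnit_iff_ne_zero]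
    exact Matrix.det_vandermonde_ne_zero_iff.mpr hc
  have hdetT : IsUnit Vᵀ.det := by simpa [Matrix.det_transpose] using hdet
  have hinv : (Vᵀ)⁻¹ * Vᵀ = 1 := Matrix.nonsing_inv_mul _ hdetT
  -- Part 1 : a = A0 * 1
  have part1 : a = A0 *ᵥ (fun _ => (1 : ℝ)) := by
    funext i
    have h := congrFun (congrFun h4 i) ⟨0, hq⟩
    simp [Matrix.mul_apply, Matrix.add_apply, vecMulVec_apply, Vand, ShiftE,
      mulVec, dotProduct, hVqdef, pow_zero, mul_one] at h ⊢
    linarith [h]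
  -- (A0 - A)ᵀ Vq = 0
  have hDT : (A0 - A)ᵀ * Vq = 0 := by
    have h25 : A0ᵀ * Vq = Aᵀ * Vq := by
      have := h5.trans h2.symm
      exact add_right_cancel this
    rw [Matrix.transpose_sub, Matrix.sub_mul, h25, sub_self]
  set u : Matrix (Fin (q + 1)) (Fin (q + 1)) ℝ := Vᵀ * (A0 - A) with hudef
  set φ0 : Fin (q + 1) → ℝ := u (Fin.last q) with hφdef
  -- u is concentrated on its last row
  have hu : u = vecMulVec (Pi.single (Fin.last q) 1) φ0 := by
    ext i j
    by_cases hi : i = Fin.last q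
    · subst hi; simp [vecMulVec_apply, hφdef]
    · have hi' : (i : ℕ) < q := Fin.val_lt_last hi
      have h0 := congrFun (congrFun hDT j) ⟨(i : ℕ), hi'⟩
      simp only [Matrix.mul_apply, Matrix.transpose_apply, Matrix.zero_apply,
        hVqdef, Vand] at h0
      have : u i j = 0 := by
        rw [hudef]
        simp only [Matrix.mul_apply, Matrix.transpose_apply, hVdef, Vand]
        rw [← h0]
        exact Finset.sum_congr rfl fun m _ => mul_comm _ _
      rw [this, vecMulVec_apply, Pi.single_eq_of_ne hi, zero_mul]
  -- rank-one representation
  have hDeq : A0 - A = vecMulVec ((Vᵀ)⁻¹ *ᵥ Pi.single (Fin.last q) 1) φ0 := by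
    have h1' : A0 - A = (Vᵀ)⁻¹ * (Vᵀ * (A0 - A)) := by
      rw [← Matrix.mul_assoc, hinv, Matrix.one_mul]
    rw [h1', ← hudef, hu, mul_vecMulVec_aux]
  have hA0 : A0 = A + vecMulVec ((Vᵀ)⁻¹ *ᵥ Pi.single (Fin.last q) 1) φ0 := by
    rw [← hDeq]; abel
  -- the identity (A0 - A) * Vq = a e1ᵀ - B1 Vq P⁻¹
  have hAVq : A * Vq = B1 * Vq * (Pasc q)⁻¹ + K * Vq * ShiftE q := by
    rw [← h1]; abel
  have hDVq : (A0 - A) * Vq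
      = vecMulVec a (Pi.single (⟨0, hq⟩ : Fin q) 1) - B1 * Vq * (Pasc q)⁻¹ := by
    rw [Matrix.sub_mul, h4, hAVq]; abel
  refine ⟨part1, φ0, hA0, ?_⟩
  intro j hj
  have key : (∑ i, φ0 i * c i ^ (j : ℕ)) = (u * Vq) (Fin.last q) j := by
    rw [Matrix.mul_apply]
    simp only [hφdef, hVqdef, Vand]
  have hj0 : j ≠ (⟨0, hq⟩ : Fin q) := by
    intro h; rw [h] at hj; simp at hj
  have hsingle : (Pi.single (⟨0, hq⟩ : Fin q) (1 : ℝ) : Fin q → ℝ) j = 0 := by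
    simp [Pi.single_apply, hj0]
  rw [key, hudef, Matrix.mul_assoc, hDVq, Matrix.mul_sub, Matrix.sub_apply,
    mul_vecMulVec_aux, vecMulVec_apply, hsingle, mul_zero, zero_sub, neg_inj,
    ← Matrix.mul_assoc, ← Matrix.mul_assoc]
end
end

section
/- Let x : ℝ → ℝ be four times continuously differentiable on an open neighborhood of [0,1] with x′(ξ) > 0 for all ξ ∈ [0,1]. Then there exists a constant C > 0 such that for every N ∈ ℕ and every n with 1 ≤ n ≤ N, setting δ = 1/(N+1), ξ_n = nδ, h_n = x(ξ_n + δ) − x(ξ_n), h_{n−1} = x(ξ_n) − x(ξ_n − δ), σ_n = h_n/h_{n−1} and η_n = (σ_n − 1)/h_n, one has |η_n − x″(ξ_n)/(x′(ξ_n))²| ≤ C·δ². -/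
open Set

set_option maxHeartbeats 1000000

lemma idw_open {f : ℝ → ℝ} {U : Set ℝ} (hU : IsOpen U) {y : ℝ} (hy : y ∈ U) (n : ℕ) :
    iteratedDerivWithin n f U y = iteratedDeriv n f y := by
  rw [iteratedDerivWithin_eq_iteratedFDerivWithin, iteratedFDerivWithin_of_isOpen n hU hy]
  rfl

lemma idw_Icc {f : ℝ → ℝ} {U : Set ℝ} (hU : IsOpen U) (hf : ContDiffOn ℝ 4 f U)
    {a b : ℝ} (hab : a < b) (hsub : Icc a b ⊆ U) {k : ℕ} (hk : k ≤ 4) {y : ℝ}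
    (hy : y ∈ Icc a b) :
    iteratedDerivWithin k f (Icc a b) y = iteratedDeriv k f y := by
  have h1 : HasFTaylorSeriesUpToOn 4 f (ftaylorSeriesWithin ℝ f U) (Icc a b) :=
    (hf.ftaylorSeriesWithin hU.uniqueDiffOn).mono hsub
  have h2 := h1.eq_iteratedFDerivWithin_of_uniqueDiffOn (by exact_mod_cast hk)
    (uniqueDiffOn_Icc hab) hy
  have h3 : ftaylorSeriesWithin ℝ f U y k = iteratedFDerivWithin ℝ k f U y := rfl
  rw [iteratedDerivWithin_eq_iteratedFDerivWithin, ← h2, h3,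
    iteratedFDerivWithin_of_isOpen k hU (hsub hy)]
  rfl

lemma taylor_est {f : ℝ → ℝ} {U : Set ℝ} (hU : IsOpen U) (hf : ContDiffOn ℝ 4 f U)
    {a b M : ℝ} (hab : a < b) (hsub : Icc a b ⊆ U)
    (hM : ∀ y ∈ Icc a b, |iteratedDeriv 4 f y| ≤ M) :
    |f b - f a - iteratedDeriv 1 f a * (b - a) - iteratedDeriv 2 f a * (b - a) ^ 2 / 2
      - iteratedDeriv 3 f a * (b - a) ^ 3 / 6| ≤ M * (b - a) ^ 4 := by
  have hsub' : Ioo a b ⊆ U := fun y hy => hsub (Ioo_subset_Icc_self hy)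
  have hf3 : ContDiffOn ℝ 3 f (Icc a b) := (hf.of_le (by norm_num)).mono hsub
  have hD3 : DifferentiableOn ℝ (iteratedDeriv 3 f) U :=
    (hf.differentiableOn_iteratedDerivWithin (by norm_num) hU.uniqueDiffOn).congr
      (fun y hy => (idw_open hU hy 3).symm)
  have hdiff : DifferentiableOn ℝ (iteratedDerivWithin 3 f (Icc a b)) (Ioo a b) :=
    (hD3.mono hsub').congr
      (fun y hy => idw_Icc hU hf hab hsub (by norm_num) (Ioo_subset_Icc_self hy))
  have hlag := taylor_mean_remainder_lagrange (n := 3) hab.ne (by rwa [uIcc_of_lt hab])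
    (by rwa [uIcc_of_lt hab, uIoo_of_lt hab])
  rw [uIcc_of_lt hab, uIoo_of_lt hab] at hlag
  obtain ⟨c, hc, hrem⟩ := hlag
  have ha : a ∈ Icc a b := left_mem_Icc.2 hab.le
  have e0 := idw_Icc hU hf hab hsub (k := 0) (by norm_num) ha
  have e1 := idw_Icc hU hf hab hsub (k := 1) (by norm_num) ha
  have e2 := idw_Icc hU hf hab hsub (k := 2) (by norm_num) ha
  have e3 := idw_Icc hU hf hab hsub (k := 3) (by norm_num) ha
  have e4 := idw_Icc hU hf hab hsub (k := 4) (by norm_num) (Ioo_subset_Icc_self hc)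
  have hT : taylorWithinEval f 3 (Icc a b) a b =
      f a + iteratedDeriv 1 f a * (b - a) + iteratedDeriv 2 f a * (b - a) ^ 2 / 2
        + iteratedDeriv 3 f a * (b - a) ^ 3 / 6 := by
    rw [taylor_within_apply]
    simp [Finset.sum_range_succ, e0, e1, e2, e3, iteratedDeriv_zero, Nat.factorial]
    ring
  rw [hT, e4] at hrem
  have hkey : f b - f a - iteratedDeriv 1 f a * (b - a) - iteratedDeriv 2 f a * (b - a) ^ 2 / 2
      - iteratedDeriv 3 f a * (b - a) ^ 3 / 6 = iteratedDeriv 4 f c * (b - a) ^ 4 / 24 := by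
    norm_num [Nat.factorial] at hrem
    rw [iteratedDeriv_one]
    linarith [hrem]
  rw [hkey]
  have hMc := hM c (Ioo_subset_Icc_self hc)
  have h1 : (0:ℝ) ≤ (b - a) ^ 4 := by positivity
  have h2 : |iteratedDeriv 4 f c * (b - a) ^ 4 / 24| = |iteratedDeriv 4 f c| * (b - a) ^ 4 / 24 := by
    rw [abs_div, abs_mul, abs_pow, abs_of_nonneg (by linarith [hab] : (0:ℝ) ≤ b - a)]
    norm_num
  rw [h2]
  nlinarith [abs_nonneg (iteratedDeriv 4 f c)]

lemma taylor_est_back {f : ℝ → ℝ} {U : Set ℝ} (hU : IsOpen U) (hf : ContDiffOn ℝ 4 f U)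
    {a b M : ℝ} (hab : a < b) (hsub : Icc a b ⊆ U)
    (hM : ∀ y ∈ Icc a b, |iteratedDeriv 4 f y| ≤ M) :
    |f a - f b + iteratedDeriv 1 f b * (b - a) - iteratedDeriv 2 f b * (b - a) ^ 2 / 2
      + iteratedDeriv 3 f b * (b - a) ^ 3 / 6| ≤ M * (b - a) ^ 4 := by
  set g : ℝ → ℝ := fun u => f (a + b - u) with hg
  set V : Set ℝ := (fun u : ℝ => a + b - u) ⁻¹' U with hV
  have hVopen : IsOpen V := hU.preimage (continuous_const.sub continuous_id)
  have hgV : ContDiffOn ℝ 4 g V :=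
    hf.comp ((contDiff_const.sub contDiff_id).contDiffOn) (fun u hu => hu)
  have hsubV : Icc a b ⊆ V := by
    intro u hu
    have : a + b - u ∈ Icc a b := ⟨by linarith [hu.2], by linarith [hu.1]⟩
    exact hsub this
  have hder : ∀ n : ℕ, ∀ u : ℝ, iteratedDeriv n g u = (-1 : ℝ) ^ n * iteratedDeriv n f (a + b - u) := by
    intro n u
    have h1 : g = fun u => (fun v => f (a + b + v)) (-u) := by
      funext w; simp [hg]; ring_nf
    rw [h1]
    rw [iteratedDeriv_comp_neg n (fun v => f (a + b + v)) u, iteratedDeriv_comp_const_add]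
    simp only [smul_eq_mul, sub_eq_add_neg]
  have hMg : ∀ y ∈ Icc a b, |iteratedDeriv 4 g y| ≤ M := by
    intro y hy
    rw [hder 4 y]
    have : a + b - y ∈ Icc a b := ⟨by linarith [hy.2], by linarith [hy.1]⟩
    norm_num
    exact hM _ this
  have H := taylor_est hVopen hgV hab hsubV hMg
  have hga : g a = f b := by simp [hg]
  have hgb : g b = f a := by simp [hg]
  rw [hga, hgb, hder 1 a, hder 2 a, hder 3 a] at H
  have harg : a + b - a = b := by ring
  rw [harg] at H
  have : f a - f b - (-1) ^ 1 * iteratedDeriv 1 f b * (b - a)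
      - (-1) ^ 2 * iteratedDeriv 2 f b * (b - a) ^ 2 / 2
      - (-1) ^ 3 * iteratedDeriv 3 f b * (b - a) ^ 3 / 6
    = f a - f b + iteratedDeriv 1 f b * (b - a) - iteratedDeriv 2 f b * (b - a) ^ 2 / 2
      + iteratedDeriv 3 f b * (b - a) ^ 3 / 6 := by ring
  rw [this] at H
  exact H

lemma mvt_lower {f : ℝ → ℝ} {U : Set ℝ} (hU : IsOpen U) (hf : ContDiffOn ℝ 4 f U)
    {a b m : ℝ} (hab : a < b) (hsub : Icc a b ⊆ U)
    (hm : ∀ y ∈ Icc a b, m ≤ deriv f y) :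
    m * (b - a) ≤ f b - f a := by
  have hcont : ContinuousOn f (Icc a b) := hf.continuousOn.mono hsub
  have hdiff : ∀ y ∈ Ioo a b, HasDerivAt f (deriv f y) y := by
    intro y hy
    have hyU : y ∈ U := hsub (Ioo_subset_Icc_self hy)
    exact ((hf.differentiableOn (by norm_num)).differentiableAt (hU.mem_nhds hyU)).hasDerivAt
  obtain ⟨c, hc, hceq⟩ := exists_hasDerivAt_eq_slope f (deriv f) hab hcont hdiff
  have hmc := hm c (Ioo_subset_Icc_self hc)
  rw [hceq] at hmc
  have hba : (0:ℝ) < b - a := by linarith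
  calc m * (b - a) ≤ (f b - f a) / (b - a) * (b - a) := by
        apply mul_le_mul_of_nonneg_right hmc hba.le
    _ = f b - f a := by field_simp

lemma mul_abs_le {a b A B : ℝ} (ha : |a| ≤ A) (hb : |b| ≤ B) : |a * b| ≤ A * B := by
  rw [abs_mul]
  exact mul_le_mul ha hb (abs_nonneg _) (le_trans (abs_nonneg _) ha)

lemma abs8 (a b c d e f g h : ℝ) :
    |a - b - c - d + e - f - g - h| ≤ |a| + |b| + |c| + |d| + |e| + |f| + |g| + |h| := by
  have s : ∀ u v : ℝ, |u - v| ≤ |u| + |v| := fun u v => abs_sub u v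
  calc |a - b - c - d + e - f - g - h|
      ≤ |a - b - c - d + e - f - g| + |h| := s _ _
    _ ≤ |a - b - c - d + e - f| + |g| + |h| := by linarith [s (a - b - c - d + e - f) g]
    _ ≤ |a - b - c - d + e| + |f| + |g| + |h| := by linarith [s (a - b - c - d + e) f]
    _ ≤ |a - b - c - d| + |e| + |f| + |g| + |h| := by linarith [abs_add_le (a - b - c - d) e]
    _ ≤ |a - b - c| + |d| + |e| + |f| + |g| + |h| := by linarith [s (a - b - c) d]
    _ ≤ |a - b| + |c| + |d| + |e| + |f| + |g| + |h| := by linarith [s (a - b) c]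
    _ ≤ |a| + |b| + |c| + |d| + |e| + |f| + |g| + |h| := by linarith [s a b]

lemma core_bound {p q r δ A B M m : ℝ}
    (hδ0 : 0 < δ) (hδ1 : δ ≤ 1) (hM1 : 1 ≤ M)
    (hpM : |p| ≤ M) (hqM : |q| ≤ M) (hrM : |r| ≤ M)
    (hm0 : 0 < m) (hmp : m ≤ p)
    (hA : m * δ ≤ A) (hB : m * δ ≤ B)
    (hE1 : |A - (p * δ + q * δ ^ 2 / 2 + r * δ ^ 3 / 6)| ≤ M * δ ^ 4)
    (hE2 : |B - (p * δ - q * δ ^ 2 / 2 + r * δ ^ 3 / 6)| ≤ M * δ ^ 4) :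
    |(A / B - 1) / A - q / p ^ 2| ≤ 8 * M ^ 3 / m ^ 4 * δ ^ 2 := by
  have hA0 : 0 < A := lt_of_lt_of_le (by positivity) hA
  have hB0 : 0 < B := lt_of_lt_of_le (by positivity) hB
  have hp0 : 0 < p := lt_of_lt_of_le hm0 hmp
  have hM0 : (0:ℝ) < M := lt_of_lt_of_le one_pos hM1
  generalize hE1def : A - (p * δ + q * δ ^ 2 / 2 + r * δ ^ 3 / 6) = E1 at hE1
  generalize hE2def : B - (p * δ - q * δ ^ 2 / 2 + r * δ ^ 3 / 6) = E2 at hE2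
  have hA' : A = (p * δ + q * δ ^ 2 / 2 + r * δ ^ 3 / 6) + E1 := by rw [← hE1def]; ring
  have hB' : B = (p * δ - q * δ ^ 2 / 2 + r * δ ^ 3 / 6) + E2 := by rw [← hE2def]; ring
  -- power facts
  have hd2 : δ ^ 2 ≤ δ := by nlinarith
  have hd3 : δ ^ 3 ≤ δ := by nlinarith [sq_nonneg δ]
  have hd5 : δ ^ 5 ≤ δ ^ 4 := by nlinarith [pow_nonneg hδ0.le 4]
  have hd6 : δ ^ 6 ≤ δ ^ 4 := by nlinarith [pow_nonneg hδ0.le 4, sq_nonneg δ, pow_nonneg hδ0.le 5]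
  have hd8 : δ ^ 8 ≤ δ ^ 4 := by nlinarith [pow_nonneg hδ0.le 4, pow_nonneg hδ0.le 6, pow_nonneg hδ0.le 5, pow_nonneg hδ0.le 7]
  have habsδ : ∀ k : ℕ, |δ ^ k| ≤ δ ^ k := fun k => le_of_eq (abs_of_nonneg (by positivity))
  -- bounds on the Taylor polynomials
  have hPb : |p * δ + q * δ ^ 2 / 2 + r * δ ^ 3 / 6| ≤ 2 * M * δ := by
    have t := abs_add_three (p * δ) (q * δ ^ 2 / 2) (r * δ ^ 3 / 6)
    have b1 : |p * δ| ≤ M * δ := mul_abs_le hpM (le_of_eq (abs_of_nonneg hδ0.le))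
    have b2 : |q * δ ^ 2 / 2| ≤ M * δ / 2 := by
      rw [abs_div, abs_mul]
      have : |q| * |δ ^ 2| ≤ M * δ := by
        have := mul_abs_le hqM (habsδ 2)
        rw [abs_mul] at this
        nlinarith [abs_nonneg q]
      rw [abs_two]
      linarith
    have b3 : |r * δ ^ 3 / 6| ≤ M * δ / 6 := by
      rw [abs_div, abs_mul]
      have : |r| * |δ ^ 3| ≤ M * δ := by
        have := mul_abs_le hrM (habsδ 3)
        rw [abs_mul] at this
        nlinarith [abs_nonneg r]
      have h6 : |(6:ℝ)| = 6 := by norm_num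
      rw [h6]
      linarith
    nlinarith [mul_nonneg hM0.le hδ0.le]
  have hQb : |p * δ - q * δ ^ 2 / 2 + r * δ ^ 3 / 6| ≤ 2 * M * δ := by
    have e : p * δ - q * δ ^ 2 / 2 + r * δ ^ 3 / 6
        = p * δ + (-(q * δ ^ 2 / 2)) + r * δ ^ 3 / 6 := by ring
    rw [e]
    have t := abs_add_three (p * δ) (-(q * δ ^ 2 / 2)) (r * δ ^ 3 / 6)
    rw [abs_neg] at t
    have b1 : |p * δ| ≤ M * δ := mul_abs_le hpM (le_of_eq (abs_of_nonneg hδ0.le))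
    have b2 : |q * δ ^ 2 / 2| ≤ M * δ / 2 := by
      rw [abs_div, abs_mul]
      have : |q| * |δ ^ 2| ≤ M * δ := by
        have := mul_abs_le hqM (habsδ 2)
        rw [abs_mul] at this
        nlinarith [abs_nonneg q]
      rw [abs_two]
      linarith
    have b3 : |r * δ ^ 3 / 6| ≤ M * δ / 6 := by
      rw [abs_div, abs_mul]
      have : |r| * |δ ^ 3| ≤ M * δ := by
        have := mul_abs_le hrM (habsδ 3)
        rw [abs_mul] at this
        nlinarith [abs_nonneg r]
      have h6 : |(6:ℝ)| = 6 := by norm_num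
      rw [h6]
      linarith
    nlinarith [mul_nonneg hM0.le hδ0.le]
  -- numerator identity
  have hid : p ^ 2 * (A - B) - q * (A * B) =
      p ^ 2 * E1 - p ^ 2 * E2 - q * (p * r * δ ^ 4 / 3) - q * (r ^ 2 * δ ^ 6 / 36)
        + q * (q ^ 2 * δ ^ 4 / 4)
        - q * ((p * δ + q * δ ^ 2 / 2 + r * δ ^ 3 / 6) * E2)
        - q * ((p * δ - q * δ ^ 2 / 2 + r * δ ^ 3 / 6) * E1)
        - q * (E1 * E2) := by
    rw [hA', hB']; ring
  -- individual term bounds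
  have hp2 : |p ^ 2| ≤ M * M := by rw [pow_two]; exact mul_abs_le hpM hpM
  have b1 : |p ^ 2 * E1| ≤ M * M * (M * δ ^ 4) := mul_abs_le hp2 hE1
  have b2 : |p ^ 2 * E2| ≤ M * M * (M * δ ^ 4) := mul_abs_le hp2 hE2
  have b3 : |q * (p * r * δ ^ 4 / 3)| ≤ M * (M * M * δ ^ 4 / 3) := by
    refine mul_abs_le hqM ?_
    rw [abs_div]
    have : |p * r * δ ^ 4| ≤ M * M * δ ^ 4 := mul_abs_le (mul_abs_le hpM hrM) (habsδ 4)
    have h3 : |(3:ℝ)| = 3 := by norm_num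
    rw [h3]
    linarith
  have b4 : |q * (r ^ 2 * δ ^ 6 / 36)| ≤ M * (M * M * δ ^ 6 / 36) := by
    refine mul_abs_le hqM ?_
    rw [abs_div]
    have hr2 : |r ^ 2| ≤ M * M := by rw [pow_two]; exact mul_abs_le hrM hrM
    have : |r ^ 2 * δ ^ 6| ≤ M * M * δ ^ 6 := mul_abs_le hr2 (habsδ 6)
    have h36 : |(36:ℝ)| = 36 := by norm_num
    rw [h36]
    linarith
  have b5 : |q * (q ^ 2 * δ ^ 4 / 4)| ≤ M * (M * M * δ ^ 4 / 4) := by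
    refine mul_abs_le hqM ?_
    rw [abs_div]
    have hq2 : |q ^ 2| ≤ M * M := by rw [pow_two]; exact mul_abs_le hqM hqM
    have : |q ^ 2 * δ ^ 4| ≤ M * M * δ ^ 4 := mul_abs_le hq2 (habsδ 4)
    have h4 : |(4:ℝ)| = 4 := by norm_num
    rw [h4]
    linarith
  have b6 : |q * ((p * δ + q * δ ^ 2 / 2 + r * δ ^ 3 / 6) * E2)| ≤ M * (2 * M * δ * (M * δ ^ 4)) :=
    mul_abs_le hqM (mul_abs_le hPb hE2)
  have b7 : |q * ((p * δ - q * δ ^ 2 / 2 + r * δ ^ 3 / 6) * E1)| ≤ M * (2 * M * δ * (M * δ ^ 4)) :=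
    mul_abs_le hqM (mul_abs_le hQb hE1)
  have b8 : |q * (E1 * E2)| ≤ M * (M * δ ^ 4 * (M * δ ^ 4)) :=
    mul_abs_le hqM (mul_abs_le hE1 hE2)
  -- assemble numerator bound
  have tri := abs8 (p ^ 2 * E1) (p ^ 2 * E2) (q * (p * r * δ ^ 4 / 3)) (q * (r ^ 2 * δ ^ 6 / 36))
    (q * (q ^ 2 * δ ^ 4 / 4)) (q * ((p * δ + q * δ ^ 2 / 2 + r * δ ^ 3 / 6) * E2))
    (q * ((p * δ - q * δ ^ 2 / 2 + r * δ ^ 3 / 6) * E1)) (q * (E1 * E2))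
  rw [← hid] at tri
  have hc5 : M ^ 3 * δ ^ 5 ≤ M ^ 3 * δ ^ 4 := mul_le_mul_of_nonneg_left hd5 (by positivity)
  have hc6 : M ^ 3 * δ ^ 6 ≤ M ^ 3 * δ ^ 4 := mul_le_mul_of_nonneg_left hd6 (by positivity)
  have hc8 : M ^ 3 * δ ^ 8 ≤ M ^ 3 * δ ^ 4 := mul_le_mul_of_nonneg_left hd8 (by positivity)
  have hnn : (0:ℝ) ≤ M ^ 3 * δ ^ 4 := by positivity
  have hNumB : |p ^ 2 * (A - B) - q * (A * B)| ≤ 8 * (M ^ 3 * δ ^ 4) := by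
    linarith [tri, b1, b2, b3, b4, b5, b6, b7, b8, hc5, hc6, hc8, hnn]
  -- denominator bound
  have h1 : (m * δ) * (m * δ) ≤ A * B := mul_le_mul hA hB (by positivity) hA0.le
  have h2 : m ^ 2 ≤ p ^ 2 := by nlinarith
  have h3 := mul_le_mul h2 h1 (by positivity) (sq_nonneg p)
  have hDge : m ^ 4 * δ ^ 2 ≤ p ^ 2 * (A * B) := by linarith [h3]
  have hDpos : 0 < p ^ 2 * (A * B) := by positivity
  -- final computation
  have key : (A / B - 1) / A - q / p ^ 2
      = (p ^ 2 * (A - B) - q * (A * B)) / (p ^ 2 * (A * B)) := by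
    field_simp
  rw [key, abs_div, abs_of_pos hDpos]
  calc |p ^ 2 * (A - B) - q * (A * B)| / (p ^ 2 * (A * B))
      ≤ 8 * (M ^ 3 * δ ^ 4) / (m ^ 4 * δ ^ 2) :=
        div_le_div₀ (by positivity) hNumB (by positivity) hDge
    _ = 8 * M ^ 3 / m ^ 4 * δ ^ 2 := by field_simp

/-- for a grid generated by a smooth mesh function `x` with positive
derivative, `η_n = (σ_n - 1)/h_n` equals `x''(ξ_n)/x'(ξ_n)²` up to `O(δ²)`. -/
theorem stmt2 (x : ℝ → ℝ) (U : Set ℝ) (hU : IsOpen U) (hIU : Icc (0 : ℝ) 1 ⊆ U)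
    (hx : ContDiffOn ℝ 4 x U)
    (hx' : ∀ ξ ∈ Icc (0 : ℝ) 1, 0 < deriv x ξ) :
    ∃ C > 0, ∀ N : ℕ, ∀ n : ℕ, 1 ≤ n → n ≤ N →
      let δ : ℝ := 1 / (N + 1)
      let ξ : ℝ := n * δ
      let hn : ℝ := x (ξ + δ) - x ξ
      let hprev : ℝ := x ξ - x (ξ - δ)
      let σ : ℝ := hn / hprev
      let η : ℝ := (σ - 1) / hn
      |η - deriv (deriv x) ξ / (deriv x ξ) ^ 2| ≤ C * δ ^ 2 := by
  -- continuity of the iterated derivatives on [0,1]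
  have hcont : ∀ i : ℕ, (i : ℕ) ≤ 4 → ContinuousOn (iteratedDeriv i x) (Icc (0:ℝ) 1) := by
    intro i hi
    have h1 : ContinuousOn (iteratedDerivWithin i x U) U :=
      hx.continuousOn_iteratedDerivWithin (by exact_mod_cast hi) hU.uniqueDiffOn
    exact (h1.congr (fun y hy => (idw_open hU hy i).symm)).mono hIU
  obtain ⟨M1, hM1⟩ := isCompact_Icc.exists_bound_of_continuousOn (hcont 1 (by norm_num))
  obtain ⟨M2, hM2⟩ := isCompact_Icc.exists_bound_of_continuousOn (hcont 2 (by norm_num))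
  obtain ⟨M3, hM3⟩ := isCompact_Icc.exists_bound_of_continuousOn (hcont 3 (by norm_num))
  obtain ⟨M4, hM4⟩ := isCompact_Icc.exists_bound_of_continuousOn (hcont 4 (by norm_num))
  set M : ℝ := |M1| + |M2| + |M3| + |M4| + 1 with hMdef
  have hM1' : (1:ℝ) ≤ M := by
    have := abs_nonneg M1; have := abs_nonneg M2; have := abs_nonneg M3; have := abs_nonneg M4
    rw [hMdef]; linarith
  have hb : ∀ i : ℕ, 1 ≤ i → i ≤ 4 → ∀ y ∈ Icc (0:ℝ) 1, |iteratedDeriv i x y| ≤ M := by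
    intro i hi1 hi4 y hy
    interval_cases i
    · have := hM1 y hy; rw [Real.norm_eq_abs] at this
      have := le_abs_self M1
      have := abs_nonneg M2; have := abs_nonneg M3; have := abs_nonneg M4
      rw [hMdef]; linarith
    · have := hM2 y hy; rw [Real.norm_eq_abs] at this
      have := le_abs_self M2
      have := abs_nonneg M1; have := abs_nonneg M3; have := abs_nonneg M4
      rw [hMdef]; linarith
    · have := hM3 y hy; rw [Real.norm_eq_abs] at this
      have := le_abs_self M3
      have := abs_nonneg M1; have := abs_nonneg M2; have := abs_nonneg M4
      rw [hMdef]; linarith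
    · have := hM4 y hy; rw [Real.norm_eq_abs] at this
      have := le_abs_self M4
      have := abs_nonneg M1; have := abs_nonneg M2; have := abs_nonneg M3
      rw [hMdef]; linarith
  -- minimum of the derivative
  have hcd : ContinuousOn (deriv x) (Icc (0:ℝ) 1) := by
    have := hcont 1 (by norm_num)
    rwa [iteratedDeriv_one] at this
  obtain ⟨ξ0, hξ0mem, hξ0min⟩ :=
    isCompact_Icc.exists_isMinOn (nonempty_Icc.mpr (by norm_num)) hcd
  set m : ℝ := deriv x ξ0 with hmdef
  have hm0 : 0 < m := hx' ξ0 hξ0mem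
  have hmle : ∀ y ∈ Icc (0:ℝ) 1, m ≤ deriv x y := fun y hy => hξ0min hy
  refine ⟨8 * M ^ 3 / m ^ 4, by positivity, ?_⟩
  intro N n hn1 hnN
  intro δ ξ A B σ η
  -- arithmetic facts about the grid
  have hNpos : (0:ℝ) < (N:ℝ) + 1 := by positivity
  have hδdef : δ = 1 / ((N:ℝ) + 1) := rfl
  have hδpos : 0 < δ := by rw [hδdef]; positivity
  have hδ1 : δ ≤ 1 := by
    rw [hδdef, div_le_one hNpos]
    have : (0:ℝ) ≤ (N:ℝ) := Nat.cast_nonneg N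
    linarith
  have hn1' : (1:ℝ) ≤ (n:ℝ) := by exact_mod_cast hn1
  have hnN' : (n:ℝ) ≤ (N:ℝ) := by exact_mod_cast hnN
  have hξdef : ξ = (n:ℝ) * δ := rfl
  have hξδ0 : 0 ≤ ξ - δ := by rw [hξdef]; nlinarith
  have hξδ1 : ξ + δ ≤ 1 := by
    rw [hξdef, hδdef]
    have e : (n:ℝ) * (1 / ((N:ℝ) + 1)) + 1 / ((N:ℝ) + 1) = ((n:ℝ) + 1) / ((N:ℝ) + 1) := by
      field_simp
    rw [e, div_le_one hNpos]
    linarith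
  have hξ0' : 0 ≤ ξ := by linarith
  have hξ1' : ξ ≤ 1 := by linarith
  have hξmem : ξ ∈ Icc (0:ℝ) 1 := ⟨hξ0', hξ1'⟩
  have hsub1 : Icc ξ (ξ + δ) ⊆ Icc (0:ℝ) 1 := Icc_subset_Icc hξ0' hξδ1
  have hsub1U : Icc ξ (ξ + δ) ⊆ U := hsub1.trans hIU
  have hsub2 : Icc (ξ - δ) ξ ⊆ Icc (0:ℝ) 1 := Icc_subset_Icc hξδ0 hξ1'
  have hsub2U : Icc (ξ - δ) ξ ⊆ U := hsub2.trans hIU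
  have hlt1 : ξ < ξ + δ := by linarith
  have hlt2 : ξ - δ < ξ := by linarith
  -- Taylor estimates
  have hTf := taylor_est hU hx hlt1 hsub1U (fun y hy => hb 4 (by norm_num) (by norm_num) y (hsub1 hy))
  have hTb := taylor_est_back hU hx hlt2 hsub2U (fun y hy => hb 4 (by norm_num) (by norm_num) y (hsub2 hy))
  have e1 : ξ + δ - ξ = δ := by ring
  have e2 : ξ - (ξ - δ) = δ := by ring
  rw [e1] at hTf
  rw [e2] at hTb
  have hi1 : iteratedDeriv 1 x ξ = deriv x ξ := by rw [iteratedDeriv_one]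
  have hi2 : iteratedDeriv 2 x ξ = deriv (deriv x) ξ := by
    rw [iteratedDeriv_succ, iteratedDeriv_one]
  rw [hi1, hi2] at hTf hTb
  -- MVT lower bounds
  have hAge : m * δ ≤ A := by
    have h := mvt_lower hU hx hlt1 hsub1U (fun y hy => hmle y (hsub1 hy))
    rw [e1] at h
    exact h
  have hBge : m * δ ≤ B := by
    have h := mvt_lower hU hx hlt2 hsub2U (fun y hy => hmle y (hsub2 hy))
    rw [e2] at h
    exact h
  -- pointwise bounds at ξ
  have hpM : |deriv x ξ| ≤ M := by
    have := hb 1 (by norm_num) (by norm_num) ξ hξmem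
    rwa [hi1] at this
  have hqM : |deriv (deriv x) ξ| ≤ M := by
    have := hb 2 (by norm_num) (by norm_num) ξ hξmem
    rwa [hi2] at this
  have hrM : |iteratedDeriv 3 x ξ| ≤ M := hb 3 (by norm_num) (by norm_num) ξ hξmem
  have hmp : m ≤ deriv x ξ := hmle ξ hξmem
  -- put the Taylor estimates in the right shape
  have hE1 : |A - (deriv x ξ * δ + deriv (deriv x) ξ * δ ^ 2 / 2 + iteratedDeriv 3 x ξ * δ ^ 3 / 6)|
      ≤ M * δ ^ 4 := by
    have e : x (ξ + δ) - x ξ - deriv x ξ * δ - deriv (deriv x) ξ * δ ^ 2 / 2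
        - iteratedDeriv 3 x ξ * δ ^ 3 / 6
      = A - (deriv x ξ * δ + deriv (deriv x) ξ * δ ^ 2 / 2 + iteratedDeriv 3 x ξ * δ ^ 3 / 6) := by
      show _ = (x (ξ + δ) - x ξ) - _
      ring
    rwa [e] at hTf
  have hE2 : |B - (deriv x ξ * δ - deriv (deriv x) ξ * δ ^ 2 / 2 + iteratedDeriv 3 x ξ * δ ^ 3 / 6)|
      ≤ M * δ ^ 4 := by
    have e : x (ξ - δ) - x ξ + deriv x ξ * δ - deriv (deriv x) ξ * δ ^ 2 / 2
        + iteratedDeriv 3 x ξ * δ ^ 3 / 6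
      = -(B - (deriv x ξ * δ - deriv (deriv x) ξ * δ ^ 2 / 2 + iteratedDeriv 3 x ξ * δ ^ 3 / 6)) := by
      show _ = -((x ξ - x (ξ - δ)) - _)
      ring
    rw [e, abs_neg] at hTb
    exact hTb
  -- conclude
  have hfinal := core_bound hδpos hδ1 hM1' hpM hqM hrM hm0 hmp hAge hBge hE1 hE2
  exact hfinal
end

section
/- Let x : ℝ → ℝ be four times continuously differentiable on an open neighborhood of [0,1] with x′(ξ) > 0 for all ξ ∈ [0,1], and let ψ : ℝ → ℝ be continuously differentiable and strictly positive on an open neighborhood of the interval x([0,1]). Assume the mesh function equation holds: the map ξ ↦ ψ(x(ξ))·x′(ξ) is constant on [0,1]. Then there exists C > 0 such that for every N ∈ ℕ and every n with 1 ≤ n ≤ N, setting δ = 1/(N+1), ξ_n = nδ, t_n = x(ξ_n), h_n = x(ξ_n + δ) − x(ξ_n), h_{n−1} = x(ξ_n) − x(ξ_n − δ), σ_n = h_n/h_{n−1} and η_n = (σ_n − 1)/h_n, one has |η_n + ψ′(t_n)/ψ(t_n)| ≤ C·δ². -/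
open Set


lemma my_iterOpen {f : ℝ → ℝ} {s : Set ℝ} (hs : IsOpen s) {y : ℝ} (hy : y ∈ s) (k : ℕ) :
    iteratedDerivWithin k f s y = iteratedDeriv k f y := by
  rw [iteratedDerivWithin_eq_iteratedFDerivWithin, iteratedDeriv_eq_iteratedFDeriv,
    iteratedFDerivWithin_of_isOpen k hs hy]

lemma my_diffAt {f : ℝ → ℝ} {s : Set ℝ} (hs : IsOpen s) (hf : ContDiffOn ℝ 4 f s)
    {k : ℕ} (hk : k < 4) {y : ℝ} (hy : y ∈ s) : DifferentiableAt ℝ (iteratedDeriv k f) y := by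
  have h1 : DifferentiableOn ℝ (iteratedDerivWithin k f s) s :=
    hf.differentiableOn_iteratedDerivWithin (by exact_mod_cast hk) hs.uniqueDiffOn
  have h2 : DifferentiableAt ℝ (iteratedDerivWithin k f s) y :=
    (h1 y hy).differentiableAt (hs.mem_nhds hy)
  have h3 : iteratedDerivWithin k f s =ᶠ[nhds y] iteratedDeriv k f :=
    Filter.eventuallyEq_of_mem (hs.mem_nhds hy) (fun z hz => my_iterOpen hs hz k)
  exact h3.differentiableAt_iff.mp h2

lemma my_contOn {f : ℝ → ℝ} {s : Set ℝ} (hs : IsOpen s) (hf : ContDiffOn ℝ 4 f s)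
    {k : ℕ} (hk : k ≤ 4) : ContinuousOn (iteratedDeriv k f) s := by
  have := hf.continuousOn_iteratedDerivWithin (m := k) (by exact_mod_cast hk) hs.uniqueDiffOn
  exact this.congr (fun z hz => (my_iterOpen hs hz k).symm)

lemma my_iterIcc {f : ℝ → ℝ} {s : Set ℝ} (hs : IsOpen s) (hf : ContDiffOn ℝ 4 f s)
    {a b : ℝ} (hab : a < b) (hsub : Icc a b ⊆ s) :
    ∀ k : ℕ, k ≤ 4 → ∀ y ∈ Icc a b, iteratedDerivWithin k f (Icc a b) y = iteratedDeriv k f y := by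
  intro k
  induction k with
  | zero => intro _ y hy; simp [iteratedDerivWithin_zero, iteratedDeriv_zero]
  | succ k ih =>
    intro hk y hy
    have hud : UniqueDiffWithinAt ℝ (Icc a b) y := (uniqueDiffOn_Icc hab) y hy
    rw [iteratedDerivWithin_succ,
      derivWithin_congr (fun z hz => ih (by omega) z hz) (ih (by omega) y hy),
      (my_diffAt hs hf (by omega) (hsub hy)).derivWithin hud, ← iteratedDeriv_succ]
lemma my_reflect (f : ℝ → ℝ) (a u : ℝ) (k : ℕ) :
    iteratedDeriv k (fun x => f (2 * a - x)) u = (-1) ^ k * iteratedDeriv k f (2 * a - u) := by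
  have h2 := iteratedDeriv_comp_neg k (fun v => f (2 * a + v)) u
  have h3 := congrFun (iteratedDeriv_comp_const_add k f (2 * a)) (-u)
  simp only [smul_eq_mul] at h2
  rw [show (fun x => f (2 * a - x)) = (fun x : ℝ => f (2 * a + -x)) by ext y; ring_nf]
  rw [h2, h3]
  ring_nf

lemma my_taylor {f : ℝ → ℝ} {s : Set ℝ} (hs : IsOpen s) (hf : ContDiffOn ℝ 4 f s)
    {a δ M : ℝ} (hδ : 0 < δ) (hsub : Icc a (a + δ) ⊆ s)
    (hM : ∀ y ∈ Icc a (a + δ), |iteratedDeriv 4 f y| ≤ M) :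
    |f (a + δ) - f a - deriv f a * δ - iteratedDeriv 2 f a * δ ^ 2 / 2
      - iteratedDeriv 3 f a * δ ^ 3 / 6| ≤ M * δ ^ 4 / 6 := by
  have hab : a < a + δ := by linarith
  have heq := my_iterIcc hs hf hab hsub
  have h4 : ContDiffOn ℝ ((3 : ℕ) + 1) f (Icc a (a + δ)) := by
    exact_mod_cast hf.mono hsub
  have hC : ∀ y ∈ Icc a (a + δ), ‖iteratedDerivWithin (3 + 1) f (Icc a (a + δ)) y‖ ≤ M := by
    intro y hy
    rw [Real.norm_eq_abs, heq 4 le_rfl y hy]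
    exact hM y hy
  have hb := taylor_mean_remainder_bound (n := 3) hab.le h4 (right_mem_Icc.mpr hab.le) hC
  rw [Real.norm_eq_abs] at hb
  have hTa : taylorWithinEval f 3 (Icc a (a + δ)) a (a + δ) =
      f a + deriv f a * δ + iteratedDeriv 2 f a * δ ^ 2 / 2 + iteratedDeriv 3 f a * δ ^ 3 / 6 := by
    rw [taylor_within_apply]
    have hmem : a ∈ Icc a (a + δ) := left_mem_Icc.mpr hab.le
    rw [show (3 : ℕ) + 1 = 4 from rfl]
    rw [Finset.sum_range_succ, Finset.sum_range_succ, Finset.sum_range_succ,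
      Finset.sum_range_one]
    rw [heq 0 (by norm_num) a hmem, heq 1 (by norm_num) a hmem,
      heq 2 (by norm_num) a hmem, heq 3 (by norm_num) a hmem]
    simp [iteratedDeriv_zero, iteratedDeriv_one, Nat.factorial]
    ring
  rw [hTa] at hb
  have : M * (a + δ - a) ^ (3 + 1) / (3 : ℕ).factorial = M * δ ^ 4 / 6 := by
    norm_num [Nat.factorial]
  rw [this] at hb
  calc |f (a + δ) - f a - deriv f a * δ - iteratedDeriv 2 f a * δ ^ 2 / 2
      - iteratedDeriv 3 f a * δ ^ 3 / 6|
      = |f (a + δ) - (f a + deriv f a * δ + iteratedDeriv 2 f a * δ ^ 2 / 2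
        + iteratedDeriv 3 f a * δ ^ 3 / 6)| := by ring_nf
    _ ≤ M * δ ^ 4 / 6 := hb

lemma my_taylor_left {f : ℝ → ℝ} {s : Set ℝ} (hs : IsOpen s) (hf : ContDiffOn ℝ 4 f s)
    {a δ M : ℝ} (hδ : 0 < δ) (hsub : Icc (a - δ) a ⊆ s)
    (hM : ∀ y ∈ Icc (a - δ) a, |iteratedDeriv 4 f y| ≤ M) :
    |f (a - δ) - f a + deriv f a * δ - iteratedDeriv 2 f a * δ ^ 2 / 2
      + iteratedDeriv 3 f a * δ ^ 3 / 6| ≤ M * δ ^ 4 / 6 := by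
  have hgiter : ∀ (k : ℕ) (u : ℝ), iteratedDeriv k (fun x => f (2 * a - x)) u
      = (-1) ^ k * iteratedDeriv k f (2 * a - u) := fun k u => my_reflect f a u k
  set s' : Set ℝ := (fun u => 2 * a - u) ⁻¹' s with hs'
  have hs'o : IsOpen s' := hs.preimage (by continuity)
  have hgc : ContDiffOn ℝ 4 (fun x => f (2 * a - x)) s' := hf.comp
    ((contDiff_const.sub contDiff_id).contDiffOn) (fun u hu => hu)
  have hsub' : Icc a (a + δ) ⊆ s' := by
    intro u hu
    simp only [hs', mem_preimage]
    apply hsub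
    simp only [mem_Icc] at hu ⊢
    constructor <;> linarith [hu.1, hu.2]
  have hM' : ∀ y ∈ Icc a (a + δ), |iteratedDeriv 4 (fun x => f (2 * a - x)) y| ≤ M := by
    intro y hy
    rw [hgiter, show ((-1 : ℝ) ^ 4) = 1 by norm_num, one_mul]
    apply hM
    simp only [mem_Icc] at hy ⊢
    constructor <;> linarith [hy.1, hy.2]
  have hb := my_taylor hs'o hgc hδ hsub' hM'
  have e0 : (fun x => f (2 * a - x)) (a + δ) = f (a - δ) := by norm_num; ring_nf
  have e1 : (fun x => f (2 * a - x)) a = f a := by norm_num; ring_nf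
  have e2 : deriv (fun x => f (2 * a - x)) a = -deriv f a := by
    have := hgiter 1 a
    rw [iteratedDeriv_one, iteratedDeriv_one] at this
    simpa [show 2 * a - a = a by ring] using this
  have e3 : iteratedDeriv 2 (fun x => f (2 * a - x)) a = iteratedDeriv 2 f a := by
    simpa [show 2 * a - a = a by ring] using hgiter 2 a
  have e4 : iteratedDeriv 3 (fun x => f (2 * a - x)) a = -iteratedDeriv 3 f a := by
    have h := hgiter 3 a
    rw [show ((-1:ℝ)) ^ 3 = -1 by norm_num, neg_one_mul, show 2 * a - a = a by ring] at h
    exact h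
  rw [show 2 * a - (a + δ) = a - δ by ring, show 2 * a - a = a by ring, e2, e3, e4] at hb
  calc |f (a - δ) - f a + deriv f a * δ - iteratedDeriv 2 f a * δ ^ 2 / 2
      + iteratedDeriv 3 f a * δ ^ 3 / 6|
      = |f (a - δ) - f a - -deriv f a * δ - iteratedDeriv 2 f a * δ ^ 2 / 2
        - -iteratedDeriv 3 f a * δ ^ 3 / 6| := by ring_nf
    _ ≤ M * δ ^ 4 / 6 := hb

lemma my_habs_mul {x y X Y : ℝ} (hx : |x| ≤ X) (hy : |y| ≤ Y) : |x * y| ≤ X * Y := by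
  rw [abs_mul]; exact mul_le_mul hx hy (abs_nonneg _) ((abs_nonneg _).trans hx)

lemma my_algebra {a b c δ m M hn hp e1 e2 : ℝ}
    (hm : 0 < m) (hma : m ≤ a) (haM : a ≤ M) (hbM : |b| ≤ M) (hcM : |c| ≤ M)
    (hδ : 0 < δ) (hδ1 : δ ≤ 1)
    (hhn : m * δ ≤ hn) (hhp : m * δ ≤ hp)
    (he1 : |e1| ≤ M * δ ^ 4 / 6) (he2 : |e2| ≤ M * δ ^ 4 / 6)
    (hE1 : e1 = hn - a * δ - b * δ ^ 2 / 2 - c * δ ^ 3 / 6)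
    (hE2 : e2 = hp - a * δ + b * δ ^ 2 / 2 - c * δ ^ 3 / 6) :
    |(hn / hp - 1) / hn - b / a ^ 2| ≤ (2 * M ^ 3 / m ^ 4) * δ ^ 2 := by
  have hapos : 0 < a := lt_of_lt_of_le hm hma
  have hM0 : 0 < M := lt_of_lt_of_le hapos haM
  have hnpos : 0 < hn := lt_of_lt_of_le (by positivity) hhn
  have hppos : 0 < hp := lt_of_lt_of_le (by positivity) hhp
  have haM' : |a| ≤ M := by rwa [abs_of_pos hapos]
  have hd3 : δ ^ 3 ≤ δ ^ 2 := pow_le_pow_of_le_one hδ.le hδ1 (by norm_num)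
  have hd4 : δ ^ 4 ≤ δ ^ 2 := pow_le_pow_of_le_one hδ.le hδ1 (by norm_num)
  set nu : ℝ := (hn - hp) * a ^ 2 - b * (hn * hp) with hnu_def
  have hiden : (hn / hp - 1) / hn - b / a ^ 2 = nu / (hn * hp * a ^ 2) := by
    field_simp
    ring
  -- bounds on p := hn - a*δ and q := hp - a*δ
  have hp_b : |hn - a * δ| ≤ M * δ ^ 2 := by
    have hrw : hn - a * δ = b * δ ^ 2 / 2 + c * δ ^ 3 / 6 + e1 := by rw [hE1]; ring
    rw [hrw]
    have t1 : |b * δ ^ 2 / 2| ≤ M * δ ^ 2 / 2 := by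
      rw [abs_div, abs_mul, abs_pow, abs_of_pos hδ]
      have : |(2 : ℝ)| = 2 := by norm_num
      rw [this]
      gcongr
    have t2 : |c * δ ^ 3 / 6| ≤ M * δ ^ 3 / 6 := by
      rw [abs_div, abs_mul, abs_pow, abs_of_pos hδ]
      have : |(6 : ℝ)| = 6 := by norm_num
      rw [this]
      gcongr
    have := (abs_add_le (b * δ ^ 2 / 2 + c * δ ^ 3 / 6) e1).trans
      (add_le_add ((abs_add_le _ _).trans (add_le_add t1 t2)) he1)
    have hmd3 : M * δ ^ 3 ≤ M * δ ^ 2 := mul_le_mul_of_nonneg_left hd3 hM0.le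
    have hmd4 : M * δ ^ 4 ≤ M * δ ^ 2 := mul_le_mul_of_nonneg_left hd4 hM0.le
    have hnn : (0:ℝ) ≤ M * δ ^ 2 := by positivity
    linarith
  have hq_b : |hp - a * δ| ≤ M * δ ^ 2 := by
    have hrw : hp - a * δ = -(b * δ ^ 2 / 2) + c * δ ^ 3 / 6 + e2 := by rw [hE2]; ring
    rw [hrw]
    have t1 : |-(b * δ ^ 2 / 2)| ≤ M * δ ^ 2 / 2 := by
      rw [abs_neg, abs_div, abs_mul, abs_pow, abs_of_pos hδ]
      have : |(2 : ℝ)| = 2 := by norm_num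
      rw [this]
      gcongr
    have t2 : |c * δ ^ 3 / 6| ≤ M * δ ^ 3 / 6 := by
      rw [abs_div, abs_mul, abs_pow, abs_of_pos hδ]
      have : |(6 : ℝ)| = 6 := by norm_num
      rw [this]
      gcongr
    have := (abs_add_le (-(b * δ ^ 2 / 2) + c * δ ^ 3 / 6) e2).trans
      (add_le_add ((abs_add_le _ _).trans (add_le_add t1 t2)) he2)
    have hmd3 : M * δ ^ 3 ≤ M * δ ^ 2 := mul_le_mul_of_nonneg_left hd3 hM0.le
    have hmd4 : M * δ ^ 4 ≤ M * δ ^ 2 := mul_le_mul_of_nonneg_left hd4 hM0.le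
    have hnn : (0:ℝ) ≤ M * δ ^ 2 := by positivity
    linarith
  -- bound on nu
  have hnu_eq : nu = a ^ 2 * (e1 - e2) - b * (a * δ) * (c * δ ^ 3 / 3 + e1 + e2)
      - b * ((hn - a * δ) * (hp - a * δ)) := by
    rw [hnu_def, hE1, hE2]; ring
  have hnu : |nu| ≤ 2 * M ^ 3 * δ ^ 4 := by
    have t1 : |a ^ 2 * (e1 - e2)| ≤ M ^ 2 * (M * δ ^ 4 / 3) := by
      apply my_habs_mul
      · rw [abs_pow]; exact pow_le_pow_left₀ (abs_nonneg _) haM' 2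
      · refine (abs_sub e1 e2).trans ?_; linarith
    have t2 : |b * (a * δ) * (c * δ ^ 3 / 3 + e1 + e2)| ≤
        M * (M * δ) * (M * δ ^ 3 / 3 + M * δ ^ 4 / 3) := by
      have s1 : |b * (a * δ)| ≤ M * (M * δ) := by
        apply my_habs_mul hbM
        rw [abs_mul, abs_of_pos hapos, abs_of_pos hδ]
        gcongr
      have tc : |c * δ ^ 3 / 3| ≤ M * δ ^ 3 / 3 := by
        rw [abs_div, abs_mul, abs_pow, abs_of_pos hδ]
        have h3 : |(3 : ℝ)| = 3 := by norm_num
        rw [h3]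
        gcongr
      have s2 : |c * δ ^ 3 / 3 + e1 + e2| ≤ M * δ ^ 3 / 3 + M * δ ^ 4 / 3 := by
        refine (abs_add_le _ _).trans (le_trans (add_le_add ((abs_add_le _ _).trans
          (add_le_add tc he1)) he2) ?_)
        linarith
      exact my_habs_mul s1 s2
    have t3 : |b * ((hn - a * δ) * (hp - a * δ))| ≤ M * (M * δ ^ 2 * (M * δ ^ 2)) :=
      my_habs_mul hbM (my_habs_mul hp_b hq_b)
    have tri : |nu| ≤ |a ^ 2 * (e1 - e2)| + |b * (a * δ) * (c * δ ^ 3 / 3 + e1 + e2)|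
        + |b * ((hn - a * δ) * (hp - a * δ))| := by
      rw [hnu_eq]
      have h1 := abs_sub (a ^ 2 * (e1 - e2) - b * (a * δ) * (c * δ ^ 3 / 3 + e1 + e2))
        (b * ((hn - a * δ) * (hp - a * δ)))
      have h2 := abs_sub (a ^ 2 * (e1 - e2)) (b * (a * δ) * (c * δ ^ 3 / 3 + e1 + e2))
      linarith
    have hd5' : δ ^ 5 ≤ δ ^ 4 := pow_le_pow_of_le_one hδ.le hδ1 (by norm_num)
    have hd5 : M ^ 3 * δ ^ 5 ≤ M ^ 3 * δ ^ 4 :=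
      mul_le_mul_of_nonneg_left hd5' (by positivity)
    have hexp : M * (M * δ) * (M * δ ^ 3 / 3 + M * δ ^ 4 / 3)
        = M ^ 3 * δ ^ 4 / 3 + M ^ 3 * δ ^ 5 / 3 := by ring
    have hexp2 : M ^ 2 * (M * δ ^ 4 / 3) = M ^ 3 * δ ^ 4 / 3 := by ring
    have hexp3 : M * (M * δ ^ 2 * (M * δ ^ 2)) = M ^ 3 * δ ^ 4 := by ring
    rw [hexp2] at t1
    rw [hexp] at t2
    rw [hexp3] at t3
    linarith
  -- denominator bound
  have hden : m ^ 4 * δ ^ 2 ≤ hn * hp * a ^ 2 := by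
    have h1 : m * δ * (m * δ) ≤ hn * hp := mul_le_mul hhn hhp (by positivity) hnpos.le
    have h2 : m ^ 2 ≤ a ^ 2 := pow_le_pow_left₀ hm.le hma 2
    have h3 : m * δ * (m * δ) * m ^ 2 ≤ hn * hp * a ^ 2 :=
      mul_le_mul h1 h2 (by positivity) (by positivity)
    calc m ^ 4 * δ ^ 2 = m * δ * (m * δ) * m ^ 2 := by ring
      _ ≤ hn * hp * a ^ 2 := h3
  have hdenpos : 0 < hn * hp * a ^ 2 := by positivity
  rw [hiden, abs_div, abs_of_pos hdenpos]
  have hrw : (2 * M ^ 3 / m ^ 4) * δ ^ 2 = (2 * M ^ 3 * δ ^ 4) / (m ^ 4 * δ ^ 2) := by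
    field_simp
  rw [hrw]
  exact div_le_div₀ (by positivity) hnu (by positivity) hden

/-- if the mesh function `x` equi-distributes the mesh density `ψ`
(`ψ(x(ξ))·x'(ξ)` constant on `[0,1]`), then `η_n = -ψ'(t_n)/ψ(t_n) + O(δ²)`. -/
theorem stmt3 (x ψ : ℝ → ℝ) (U : Set ℝ) (hU : IsOpen U) (hIU : Icc (0 : ℝ) 1 ⊆ U)
    (hx : ContDiffOn ℝ 4 x U)
    (hx' : ∀ ξ ∈ Icc (0 : ℝ) 1, 0 < deriv x ξ)
    (V : Set ℝ) (hV : IsOpen V) (himg : x '' Icc (0 : ℝ) 1 ⊆ V)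
    (hψ : ContDiffOn ℝ 1 ψ V)
    (hψpos : ∀ t ∈ V, 0 < ψ t)
    (hmesh : ∀ ξ₁ ∈ Icc (0 : ℝ) 1, ∀ ξ₂ ∈ Icc (0 : ℝ) 1,
      ψ (x ξ₁) * deriv x ξ₁ = ψ (x ξ₂) * deriv x ξ₂) :
    ∃ C > 0, ∀ N : ℕ, ∀ n : ℕ, 1 ≤ n → n ≤ N →
      let δ : ℝ := 1 / (N + 1)
      let ξ : ℝ := n * δ
      let t : ℝ := x ξ
      let hn : ℝ := x (ξ + δ) - x ξ
      let hprev : ℝ := x ξ - x (ξ - δ)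
      let σ : ℝ := hn / hprev
      let η : ℝ := (σ - 1) / hn
      |η + deriv ψ t / ψ t| ≤ C * δ ^ 2 := by
  have hdiffx : ∀ z ∈ U, DifferentiableAt ℝ x z := by
    intro z hz
    have := my_diffAt hU hx (k := 0) (by norm_num) hz
    rwa [iteratedDeriv_zero] at this
  have hxc : ContinuousOn x (Icc 0 1) := (hx.continuousOn).mono hIU
  have hd1c : ContinuousOn (deriv x) (Icc 0 1) := by
    have := (my_contOn hU hx (k := 1) (by norm_num)).mono hIU
    rwa [iteratedDeriv_one] at this
  -- minimum of deriv x
  obtain ⟨ξm, hξm, hminOn⟩ := isCompact_Icc.exists_isMinOn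
    ⟨0, left_mem_Icc.mpr one_pos.le⟩ hd1c
  set m : ℝ := deriv x ξm with hmdef
  have hm : 0 < m := hx' ξm hξm
  have hmle : ∀ ζ ∈ Icc (0:ℝ) 1, m ≤ deriv x ζ := fun ζ hζ => hminOn hζ
  -- bounds on iterated derivatives
  have hbound : ∀ k : ℕ, k ≤ 4 → ∃ B : ℝ, ∀ ζ ∈ Icc (0:ℝ) 1, |iteratedDeriv k x ζ| ≤ B := by
    intro k hk
    obtain ⟨B, hB⟩ := isCompact_Icc.exists_bound_of_continuousOn
      ((my_contOn hU hx hk).mono hIU)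
    exact ⟨B, fun ζ hζ => by simpa [Real.norm_eq_abs] using hB ζ hζ⟩
  obtain ⟨M1, hM1⟩ := hbound 1 (by norm_num)
  obtain ⟨M2, hM2⟩ := hbound 2 (by norm_num)
  obtain ⟨M3, hM3⟩ := hbound 3 (by norm_num)
  obtain ⟨M4, hM4⟩ := hbound 4 (by norm_num)
  set M : ℝ := max 1 (max (max M1 M2) (max M3 M4)) with hMdef
  have hM1' : ∀ ζ ∈ Icc (0:ℝ) 1, |deriv x ζ| ≤ M := by
    intro ζ hζ
    have := hM1 ζ hζ
    rw [iteratedDeriv_one] at this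
    exact this.trans (le_max_of_le_right (le_max_of_le_left (le_max_left _ _)))
  have hM2' : ∀ ζ ∈ Icc (0:ℝ) 1, |iteratedDeriv 2 x ζ| ≤ M := fun ζ hζ =>
    (hM2 ζ hζ).trans (le_max_of_le_right (le_max_of_le_left (le_max_right _ _)))
  have hM3' : ∀ ζ ∈ Icc (0:ℝ) 1, |iteratedDeriv 3 x ζ| ≤ M := fun ζ hζ =>
    (hM3 ζ hζ).trans (le_max_of_le_right (le_max_of_le_right (le_max_left _ _)))
  have hM4' : ∀ ζ ∈ Icc (0:ℝ) 1, |iteratedDeriv 4 x ζ| ≤ M := fun ζ hζ =>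
    (hM4 ζ hζ).trans (le_max_of_le_right (le_max_of_le_right (le_max_right _ _)))
  have hM1pos : (1:ℝ) ≤ M := le_max_left _ _
  -- the mesh identity, differentiated
  have hkey : ∀ ζ ∈ Ioo (0:ℝ) 1,
      deriv ψ (x ζ) * (deriv x ζ) ^ 2 + ψ (x ζ) * iteratedDeriv 2 x ζ = 0 := by
    intro ζ hζ
    have hζI : ζ ∈ Icc (0:ℝ) 1 := Ioo_subset_Icc_self hζ
    have hζU : ζ ∈ U := hIU hζI
    have hxd : HasDerivAt x (deriv x ζ) ζ := (hdiffx ζ hζU).hasDerivAt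
    have hd1d : DifferentiableAt ℝ (deriv x) ζ := by
      have := my_diffAt hU hx (k := 1) (by norm_num) hζU
      rwa [iteratedDeriv_one] at this
    have hiter2 : iteratedDeriv 2 x = deriv (deriv x) := by
      rw [iteratedDeriv_succ, iteratedDeriv_one]
    have hx2d : HasDerivAt (deriv x) (iteratedDeriv 2 x ζ) ζ := by
      rw [hiter2]; exact hd1d.hasDerivAt
    have htV : x ζ ∈ V := himg ⟨ζ, hζI, rfl⟩
    have hψd : HasDerivAt ψ (deriv ψ (x ζ)) (x ζ) :=
      (((hψ.differentiableOn one_ne_zero) (x ζ) htV).differentiableAt (hV.mem_nhds htV)).hasDerivAt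
    have hcomp : HasDerivAt (fun ζ' => ψ (x ζ')) (deriv ψ (x ζ) * deriv x ζ) ζ :=
      hψd.comp ζ hxd
    have hg : HasDerivAt (fun ζ' => ψ (x ζ') * deriv x ζ')
        (deriv ψ (x ζ) * deriv x ζ * deriv x ζ + ψ (x ζ) * iteratedDeriv 2 x ζ) ζ :=
      hcomp.mul hx2d
    have hconst : (fun ζ' => ψ (x ζ') * deriv x ζ') =ᶠ[nhds ζ]
        (fun _ => ψ (x ζ) * deriv x ζ) :=
      Filter.eventuallyEq_of_mem (isOpen_Ioo.mem_nhds hζ)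
        (fun z hz => hmesh z (Ioo_subset_Icc_self hz) ζ hζI)
    have hzero : deriv (fun ζ' => ψ (x ζ') * deriv x ζ') ζ = 0 := by
      rw [hconst.deriv_eq]; exact deriv_const ζ _
    rw [hg.deriv] at hzero
    nlinarith [hzero]
  -- mean value theorem lower bound
  have hmvt : ∀ u v : ℝ, u ∈ Icc (0:ℝ) 1 → v ∈ Icc (0:ℝ) 1 → u < v →
      m * (v - u) ≤ x v - x u := by
    intro u v hu hv huv
    obtain ⟨w, hw, heq⟩ := exists_hasDerivAt_eq_slope x (deriv x) huv
      (hxc.mono (Icc_subset_Icc hu.1 hv.2))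
      (fun z hz => (hdiffx z (hIU ⟨le_trans hu.1 hz.1.le, le_trans hz.2.le hv.2⟩)).hasDerivAt)
    have hwI : w ∈ Icc (0:ℝ) 1 := ⟨le_trans hu.1 hw.1.le, le_trans hw.2.le hv.2⟩
    have h1 : m ≤ (x v - x u) / (v - u) := heq ▸ hmle w hwI
    exact (le_div_iff₀ (by linarith)).mp h1
  -- conclusion
  refine ⟨2 * M ^ 3 / m ^ 4, by positivity, ?_⟩
  intro N n hn1 hnN
  dsimp only
  set δ : ℝ := 1 / ((N:ℝ) + 1) with hδdef
  set ξ : ℝ := (n:ℝ) * δ with hξdef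
  have hNpos : (0:ℝ) < (N:ℝ) + 1 := by positivity
  have hδpos : 0 < δ := by rw [hδdef]; positivity
  have hδ1 : δ ≤ 1 := by
    rw [hδdef, div_le_one hNpos]
    have : (0:ℝ) ≤ (N:ℝ) := Nat.cast_nonneg N
    linarith
  have hn1' : (1:ℝ) ≤ (n:ℝ) := by exact_mod_cast hn1
  have hnN' : (n:ℝ) ≤ (N:ℝ) := by exact_mod_cast hnN
  have hNδ : ((N:ℝ) + 1) * δ = 1 := by
    rw [hδdef]; field_simp
  have hξl : δ ≤ ξ := by rw [hξdef]; nlinarith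
  have hξr : ξ + δ ≤ 1 := by
    rw [hξdef]
    nlinarith
  have hmem : ξ ∈ Icc (0:ℝ) 1 := ⟨by linarith, by linarith⟩
  have hmemIoo : ξ ∈ Ioo (0:ℝ) 1 := ⟨by linarith, by linarith⟩
  have hsubr : Icc ξ (ξ + δ) ⊆ Icc (0:ℝ) 1 :=
    Icc_subset_Icc (by linarith) (by linarith)
  have hsubl : Icc (ξ - δ) ξ ⊆ Icc (0:ℝ) 1 :=
    Icc_subset_Icc (by linarith) (by linarith)
  have ht1 := my_taylor hU hx hδpos (hsubr.trans hIU)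
    (fun y hy => hM4' y (hsubr hy))
  have ht2 := my_taylor_left hU hx hδpos (hsubl.trans hIU)
    (fun y hy => hM4' y (hsubl hy))
  -- abbreviations
  set a : ℝ := deriv x ξ with hadef
  set b : ℝ := iteratedDeriv 2 x ξ with hbdef
  set c : ℝ := iteratedDeriv 3 x ξ with hcdef
  have hhn : m * δ ≤ x (ξ + δ) - x ξ := by
    have h := hmvt ξ (ξ + δ) hmem ⟨by linarith, hξr⟩ (by linarith)
    calc m * δ = m * (ξ + δ - ξ) := by ring
      _ ≤ x (ξ + δ) - x ξ := h
  have hhp : m * δ ≤ x ξ - x (ξ - δ) := by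
    have h := hmvt (ξ - δ) ξ ⟨by linarith, by linarith⟩ hmem (by linarith)
    calc m * δ = m * (ξ - (ξ - δ)) := by ring
      _ ≤ x ξ - x (ξ - δ) := h
  -- the ψ relation
  have htV : x ξ ∈ V := himg ⟨ξ, hmem, rfl⟩
  have hψt : 0 < ψ (x ξ) := hψpos _ htV
  have hapos : 0 < a := hx' ξ hmem
  have hrel : deriv ψ (x ξ) / ψ (x ξ) = -(b / a ^ 2) := by
    have hk := hkey ξ hmemIoo
    rw [← hadef, ← hbdef] at hk
    field_simp
    nlinarith [hk]
  -- error terms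
  have he1 : |x (ξ + δ) - x ξ - a * δ - b * δ ^ 2 / 2 - c * δ ^ 3 / 6| ≤ M * δ ^ 4 / 6 := ht1
  have he2 : |x ξ - x (ξ - δ) - a * δ + b * δ ^ 2 / 2 - c * δ ^ 3 / 6| ≤ M * δ ^ 4 / 6 := by
    have hneg : x ξ - x (ξ - δ) - a * δ + b * δ ^ 2 / 2 - c * δ ^ 3 / 6
        = -(x (ξ - δ) - x ξ + a * δ - b * δ ^ 2 / 2 + c * δ ^ 3 / 6) := by ring
    rw [hneg, abs_neg]
    exact ht2
  have halg := my_algebra hm (hmle ξ hmem) (by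
      have := hM1' ξ hmem; rwa [abs_of_pos hapos] at this)
    (hM2' ξ hmem) (hM3' ξ hmem) hδpos hδ1 hhn hhp he1 he2 (by ring) (by ring)
  rw [hrel, ← sub_eq_add_neg]
  exact halg
end

section
/- Let s ≥ 2, 1 ≤ q ≤ s, c ∈ ℝ^s, σ ≠ 0, and A, K, B ∈ ℝ^{s×s}. (a) If A·V_q − K·V_q·E_q = B·V_q·P_q^{-1}·S_q(σ)^{-1}, then B·1 = A·1. (b) If Aᵀ·V_q + K·V_q·E_q = Bᵀ·V_q·S_q(σ)·P_q, then Bᵀ·1 = Aᵀ·1. Consequently, if A is invertible and both (a) and (b) hold, then A^{-1}B·1 = 1 and (1ᵀA)·(A^{-1}B) = 1ᵀA, i.e., 1 is a right eigenvector and 1ᵀA a left eigenvector of the stability matrix A^{-1}B for the eigenvalue 1. -/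
open Matrix BigOperators

noncomputable section

/-- Scaling matrix `S_r(σ) = diag(1, σ, …, σ^{r-1})`. -/
def Sdiag (r : ℕ) (σ : ℝ) : Matrix (Fin r) (Fin r) ℝ :=
  Matrix.diagonal fun i => σ ^ (i : ℕ)

lemma pasc_det (r : ℕ) : (Pasc r).det = 1 := by
  have h : (Pasc r).BlockTriangular id := by
    intro i j hij
    simp only [Pasc]
    rw [Nat.choose_eq_zero_of_lt (by exact_mod_cast hij)]
    simp
  rw [Matrix.det_of_upperTriangular h]
  simp [Pasc]

lemma sdiag_det (r : ℕ) (σ : ℝ) (hσ : σ ≠ 0) : (Sdiag r σ).det ≠ 0 := by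
  rw [Sdiag, Matrix.det_diagonal]
  exact Finset.prod_ne_zero_iff.2 fun i _ => pow_ne_zero _ hσ

/-- consistency implies that `1` is a right eigenvector and `1ᵀA`
a left eigenvector of the stability matrix `A⁻¹B` for the eigenvalue `1`. -/
theorem stmt4 (s q : ℕ) (hs : 2 ≤ s) (hq1 : 1 ≤ q) (hqs : q ≤ s)
    (c : Fin s → ℝ) (σ : ℝ) (hσ : σ ≠ 0)
    (A K B : Matrix (Fin s) (Fin s) ℝ) :
    ((A * Vand s c q - K * Vand s c q * ShiftE q
        = B * Vand s c q * (Pasc q)⁻¹ * (Sdiag q σ)⁻¹) →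
      B *ᵥ (fun _ => (1 : ℝ)) = A *ᵥ (fun _ => (1 : ℝ))) ∧
    ((Aᵀ * Vand s c q + K * Vand s c q * ShiftE q
        = Bᵀ * Vand s c q * Sdiag q σ * Pasc q) →
      Bᵀ *ᵥ (fun _ => (1 : ℝ)) = Aᵀ *ᵥ (fun _ => (1 : ℝ))) ∧
    (IsUnit A.det →
      (A * Vand s c q - K * Vand s c q * ShiftE q
        = B * Vand s c q * (Pasc q)⁻¹ * (Sdiag q σ)⁻¹) →
      (Aᵀ * Vand s c q + K * Vand s c q * ShiftE q
        = Bᵀ * Vand s c q * Sdiag q σ * Pasc q) →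
      (A⁻¹ * B) *ᵥ (fun _ => (1 : ℝ)) = (fun _ => (1 : ℝ)) ∧
      ((fun _ => (1 : ℝ)) ᵥ* A) ᵥ* (A⁻¹ * B) = (fun _ => (1 : ℝ)) ᵥ* A) := by
  have hq : 0 < q := hq1
  set z : Fin q := ⟨0, hq⟩ with hz
  set e0 : Fin q → ℝ := Pi.single z 1 with he0
  have hV : Vand s c q *ᵥ e0 = fun _ => (1 : ℝ) := by
    funext i
    rw [he0, Matrix.mulVec_single]
    simp [Vand, hz]
  have hE : ShiftE q *ᵥ e0 = 0 := by
    funext i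
    rw [he0, Matrix.mulVec_single]
    simp [ShiftE, hz]
  have hP : Pasc q *ᵥ e0 = e0 := by
    funext i
    rw [he0, Matrix.mulVec_single]
    by_cases h : i = z
    · rw [h, Pi.single_eq_same]
      simp [Pasc]
    · have : (z : ℕ) < (i : ℕ) := by
        have h2 := Fin.val_ne_of_ne h
        have hzv : (z : ℕ) = 0 := rfl
        omega
      simp [Pasc, Nat.choose_eq_zero_of_lt this, Pi.single_eq_of_ne h]
  have hS : Sdiag q σ *ᵥ e0 = e0 := by
    funext i
    rw [he0, Sdiag, Matrix.diagonal_mulVec_single]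
    by_cases h : i = z
    · simp [h, hz]
    · simp [Pi.single_eq_of_ne h]
  have hPu : IsUnit (Pasc q).det := by rw [pasc_det]; exact isUnit_one
  have hSu : IsUnit (Sdiag q σ).det := isUnit_iff_ne_zero.2 (sdiag_det q σ hσ)
  have hPinv : (Pasc q)⁻¹ *ᵥ e0 = e0 := by
    conv_lhs => rw [← hP]
    rw [Matrix.mulVec_mulVec, Matrix.nonsing_inv_mul _ hPu, Matrix.one_mulVec]
  have hSinv : (Sdiag q σ)⁻¹ *ᵥ e0 = e0 := by
    conv_lhs => rw [← hS]
    rw [Matrix.mulVec_mulVec, Matrix.nonsing_inv_mul _ hSu, Matrix.one_mulVec]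
  have partA : (A * Vand s c q - K * Vand s c q * ShiftE q
        = B * Vand s c q * (Pasc q)⁻¹ * (Sdiag q σ)⁻¹) →
      B *ᵥ (fun _ => (1 : ℝ)) = A *ᵥ (fun _ => (1 : ℝ)) := by
    intro h
    have := congrArg (fun M => M *ᵥ e0) h
    simp only [Matrix.sub_mulVec, ← Matrix.mulVec_mulVec] at this
    rw [hSinv, hPinv, hV, hE, Matrix.mulVec_zero, Matrix.mulVec_zero, sub_zero]
      at this
    exact this.symm
  have partB : (Aᵀ * Vand s c q + K * Vand s c q * ShiftE q
        = Bᵀ * Vand s c q * Sdiag q σ * Pasc q) →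
      Bᵀ *ᵥ (fun _ => (1 : ℝ)) = Aᵀ *ᵥ (fun _ => (1 : ℝ)) := by
    intro h
    have := congrArg (fun M => M *ᵥ e0) h
    simp only [Matrix.add_mulVec, ← Matrix.mulVec_mulVec] at this
    rw [hP, hS, hV, hE, Matrix.mulVec_zero, Matrix.mulVec_zero, add_zero] at this
    exact this.symm
  refine ⟨partA, partB, fun hA h1 h2 => ?_⟩
  have ha := partA h1
  have hb := partB h2
  constructor
  · rw [← Matrix.mulVec_mulVec, ha, Matrix.mulVec_mulVec,
      Matrix.nonsing_inv_mul _ hA, Matrix.one_mulVec]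
  · have hvb : (fun _ => (1 : ℝ)) ᵥ* B = (fun _ => (1 : ℝ)) ᵥ* A := by
      rw [← Matrix.mulVec_transpose, ← Matrix.mulVec_transpose, hb]
    rw [Matrix.vecMul_vecMul, ← Matrix.mul_assoc,
      Matrix.mul_nonsing_inv _ hA, Matrix.one_mul, hvb]
end
end

section
/- Let s ≥ 2 and let c ∈ ℝ^s have pairwise distinct entries with c_s = 1, and let A ∈ ℝ^{s×s} satisfy 1ᵀ·A·V_s = 1ᵀ. Then 1ᵀ·A = e_sᵀ. Moreover, if in addition B ∈ ℝ^{s×s} satisfies Bᵀ·1 = Aᵀ·1, K = diag(κ₁,…,κ_s), h ∈ ℝ, m ≥ 1, and Y, Z, G ∈ ℝ^{s×m} satisfy A·Y = B·Z + h·K·G, then the last rows satisfy Y_{s,·} = Z_{s,·} + h·Σ_{j=1}^{s} κ_j·G_{j,·} (a Runge–Kutta-type final stage). -/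
open Matrix BigOperators

noncomputable section

/-- the LSRK condition `1ᵀ·A·V_s = 1ᵀ` (with distinct nodes, `c_s = 1`)
forces `1ᵀ·A = e_sᵀ`, so the last stage of a Peer step is a Runge–Kutta-type step.
Here `s = n + 2 ≥ 2`. -/
theorem stmt5 (n : ℕ) (c : Fin (n + 2) → ℝ) (hc : Function.Injective c)
    (hcs : c (Fin.last (n + 1)) = 1)
    (A : Matrix (Fin (n + 2)) (Fin (n + 2)) ℝ)
    (hA : ((fun _ => (1 : ℝ)) ᵥ* A) ᵥ* Matrix.vandermonde c = fun _ => (1 : ℝ)) :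
    ((fun _ => (1 : ℝ)) ᵥ* A = Pi.single (Fin.last (n + 1)) 1) ∧
    ∀ (B : Matrix (Fin (n + 2)) (Fin (n + 2)) ℝ) (κ : Fin (n + 2) → ℝ) (h : ℝ)
      (m : ℕ), 1 ≤ m → ∀ (Y Z G : Matrix (Fin (n + 2)) (Fin m) ℝ),
      Bᵀ *ᵥ (fun _ => (1 : ℝ)) = Aᵀ *ᵥ (fun _ => (1 : ℝ)) →
      A * Y = B * Z + h • (Matrix.diagonal κ * G) →
      ∀ col, Y (Fin.last (n + 1)) col
        = Z (Fin.last (n + 1)) col + h * ∑ j, κ j * G j col := by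
  have hVunit : IsUnit (Matrix.vandermonde c) := by
    rw [Matrix.isUnit_iff_isUnit_det]
    exact (Matrix.det_vandermonde_ne_zero_iff.mpr hc).isUnit
  have hsingle : (Pi.single (Fin.last (n + 1)) (1 : ℝ)) ᵥ* Matrix.vandermonde c
      = fun _ => (1 : ℝ) := by
    funext j
    simp [Matrix.vecMul, dotProduct, Pi.single_apply, Matrix.vandermonde, hcs]
  have hmain : (fun _ => (1 : ℝ)) ᵥ* A = Pi.single (Fin.last (n + 1)) 1 := by
    exact Matrix.vecMul_injective_iff_isUnit.mpr hVunit (hA.trans hsingle.symm)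
  refine ⟨hmain, ?_⟩
  intro B κ h m hm Y Z G hB hstep col
  have hB' : (fun _ => (1 : ℝ)) ᵥ* B = Pi.single (Fin.last (n + 1)) 1 := by
    rw [← Matrix.mulVec_transpose, hB, Matrix.mulVec_transpose, hmain]
  have key := congrArg (fun M => (fun _ => (1 : ℝ)) ᵥ* M) hstep
  simp only [Matrix.vecMul_add, ← Matrix.vecMul_vecMul, hmain, hB'] at key
  have hsmul : (fun _ => (1 : ℝ)) ᵥ* (h • (Matrix.diagonal κ * G))
      = fun j => h * ∑ i, κ i * G i j := by
    funext j
    simp [Matrix.vecMul, dotProduct, Matrix.mul_apply, Matrix.diagonal,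
      Finset.mul_sum, Finset.sum_mul]
  rw [hsmul] at key
  have hY : (Pi.single (Fin.last (n + 1)) (1:ℝ)) ᵥ* Y = Y (Fin.last (n + 1)) := by
    funext j; simp [Matrix.vecMul, dotProduct, Pi.single_apply]
  have hZ : (Pi.single (Fin.last (n + 1)) (1:ℝ)) ᵥ* Z = Z (Fin.last (n + 1)) := by
    funext j; simp [Matrix.vecMul, dotProduct, Pi.single_apply]
  rw [hY, hZ] at key
  exact congrFun key col
end
end

section
/- Let s ≥ 2, let A, W ∈ ℝ^{s×s} with W invertible, W·e₁ = 1 and 1ᵀ·A·W = e₁ᵀ, and let 0 ≤ γ < 1. Let M₁, …, M_r ∈ ℝ^{s×s} (r ≥ 1) be such that for each j the matrix W^{-1}·M_j·W has first row equal to e₁ᵀ, first column equal to e₁, and its lower-right (s−1)×(s−1) block N_j satisfies ‖N_j‖_∞ ≤ γ. Then ‖M_r·M_{r−1}⋯M₁ − 1·(1ᵀA)‖_∞ ≤ ‖W‖_∞·‖W^{-1}‖_∞·γ^r, where ‖M‖_∞ denotes the maximum absolute row sum and 1·(1ᵀA) is the rank-one matrix with rows all equal to 1ᵀA. -/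
open Matrix BigOperators

noncomputable section

/-- Maximum absolute row sum norm `‖M‖_∞`. -/
def rowNormInf {k l : ℕ} (M : Matrix (Fin (k + 1)) (Fin l) ℝ) : ℝ :=
  Finset.univ.sup' Finset.univ_nonempty fun i => ∑ j, |M i j|



lemma row_le_rowNormInf {k l : ℕ} (M : Matrix (Fin (k+1)) (Fin l) ℝ) (i : Fin (k+1)) :
    ∑ j, |M i j| ≤ rowNormInf M := by
  exact Finset.le_sup' (fun i => ∑ j, |M i j|) (Finset.mem_univ i)

lemma rowNormInf_nonneg {k l : ℕ} (M : Matrix (Fin (k+1)) (Fin l) ℝ) :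
    0 ≤ rowNormInf M :=
  le_trans (Finset.sum_nonneg fun _ _ => abs_nonneg _) (row_le_rowNormInf M 0)

lemma rowNormInf_le {k l : ℕ} (M : Matrix (Fin (k+1)) (Fin l) ℝ) (c : ℝ)
    (h : ∀ i, ∑ j, |M i j| ≤ c) : rowNormInf M ≤ c := by
  exact Finset.sup'_le _ _ fun i _ => h i

lemma rowNormInf_mul_le {k : ℕ} (M N : Matrix (Fin (k+1)) (Fin (k+1)) ℝ) :
    rowNormInf (M * N) ≤ rowNormInf M * rowNormInf N := by
  apply rowNormInf_le
  intro i
  calc ∑ j, |(M * N) i j| ≤ ∑ j, ∑ l, |M i l| * |N l j| := by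
        apply Finset.sum_le_sum; intro j _
        simp only [Matrix.mul_apply]
        refine le_trans (Finset.abs_sum_le_sum_abs _ _) ?_
        apply Finset.sum_le_sum; intro l _; rw [abs_mul]
    _ = ∑ l, |M i l| * ∑ j, |N l j| := by
        rw [Finset.sum_comm]; simp [Finset.mul_sum]
    _ ≤ ∑ l, |M i l| * rowNormInf N := by
        apply Finset.sum_le_sum; intro l _
        exact mul_le_mul_of_nonneg_left (row_le_rowNormInf N l) (abs_nonneg _)
    _ = (∑ l, |M i l|) * rowNormInf N := by rw [Finset.sum_mul]
    _ ≤ rowNormInf M * rowNormInf N :=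
        mul_le_mul_of_nonneg_right (row_le_rowNormInf M i) (rowNormInf_nonneg N)

lemma prod_struct {n : ℕ} (γ : ℝ) (hγ0 : 0 ≤ γ)
    (L : List (Matrix (Fin (n+2)) (Fin (n+2)) ℝ))
    (hrow : ∀ D ∈ L, D 0 = Pi.single (0 : Fin (n+2)) 1)
    (hcol : ∀ D ∈ L, (fun i => D i 0) = Pi.single (0 : Fin (n+2)) 1)
    (hblk : ∀ D ∈ L, rowNormInf (D.submatrix Fin.succ Fin.succ) ≤ γ) :
    L.prod 0 = Pi.single (0 : Fin (n+2)) 1 ∧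
    (fun i => L.prod i 0) = Pi.single (0 : Fin (n+2)) 1 ∧
    rowNormInf (L.prod.submatrix Fin.succ Fin.succ) ≤ γ ^ L.length := by
  induction L with
  | nil =>
    refine ⟨?_, ?_, ?_⟩
    · funext j; simp [Matrix.one_apply, Pi.single_apply, eq_comm]
    · funext i; simp [Matrix.one_apply, Pi.single_apply]
    · simp only [List.prod_nil, List.length_nil, pow_zero]
      apply rowNormInf_le
      intro i
      have h1 : (∑ j, |((1 : Matrix (Fin (n+2)) (Fin (n+2)) ℝ).submatrix Fin.succ Fin.succ) i j|) = ∑ j, if i = j then (1:ℝ) else 0 := by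
        apply Finset.sum_congr rfl
        intro j _
        simp [Matrix.one_apply, Fin.succ_inj, apply_ite abs]
      rw [h1]
      simp
  | cons D L ih =>
    obtain ⟨ihr, ihc, ihb⟩ := ih (fun D h => hrow D (List.mem_cons_of_mem _ h))
      (fun D h => hcol D (List.mem_cons_of_mem _ h))
      (fun D h => hblk D (List.mem_cons_of_mem _ h))
    have hDr := hrow D List.mem_cons_self
    have hDc := hcol D List.mem_cons_self
    have hDb := hblk D List.mem_cons_self
    have hD0 := fun i => congrFun hDc i
    have hP0 := fun i => congrFun ihc i
    refine ⟨?_, ?_, ?_⟩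
    · funext j
      simp only [List.prod_cons, Matrix.mul_apply]
      calc ∑ k, D 0 k * L.prod k j = ∑ k, (if k = 0 then (1:ℝ) else 0) * L.prod k j := by
            apply Finset.sum_congr rfl; intro k _
            rw [congrFun hDr k]; simp [Pi.single_apply]
        _ = L.prod 0 j := by simp
        _ = (Pi.single (0 : Fin (n+2)) (1:ℝ) : Fin (n+2) → ℝ) j := by exact congrFun ihr j
    · funext i
      simp only [List.prod_cons, Matrix.mul_apply]
      calc ∑ k, D i k * L.prod k 0 = ∑ k, D i k * (if k = 0 then (1:ℝ) else 0) := by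
            apply Finset.sum_congr rfl; intro k _
            rw [hP0 k]; simp [Pi.single_apply]
        _ = D i 0 := by simp
        _ = (Pi.single (0 : Fin (n+2)) (1:ℝ) : Fin (n+2) → ℝ) i := by exact hD0 i
    · have hsub : ((D :: L).prod).submatrix Fin.succ Fin.succ
          = D.submatrix Fin.succ Fin.succ * L.prod.submatrix Fin.succ Fin.succ := by
        ext i j
        simp only [List.prod_cons, Matrix.submatrix_apply, Matrix.mul_apply]
        rw [Fin.sum_univ_succ]
        have h0 : D i.succ 0 = 0 := by rw [hD0]; simp [Pi.single_apply, Fin.succ_ne_zero]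
        rw [h0, zero_mul, zero_add]
      rw [hsub, List.length_cons, pow_succ']
      calc rowNormInf (D.submatrix Fin.succ Fin.succ * L.prod.submatrix Fin.succ Fin.succ)
          ≤ rowNormInf (D.submatrix Fin.succ Fin.succ) * rowNormInf (L.prod.submatrix Fin.succ Fin.succ) :=
            rowNormInf_mul_le _ _
        _ ≤ γ * γ ^ L.length := by
            apply mul_le_mul hDb ihb (rowNormInf_nonneg _) hγ0

lemma conj_prod {n : ℕ} (W : Matrix (Fin (n+2)) (Fin (n+2)) ℝ) (hW : IsUnit W.det)
    (L : List (Matrix (Fin (n+2)) (Fin (n+2)) ℝ)) :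
    (L.map (fun D => W * D * W⁻¹)).prod = W * L.prod * W⁻¹ := by
  induction L with
  | nil => simp [Matrix.mul_nonsing_inv W hW]
  | cons D L ih =>
    simp only [List.map_cons, List.prod_cons, ih]
    rw [show W * D * W⁻¹ * (W * L.prod * W⁻¹) = W * D * (W⁻¹ * W) * L.prod * W⁻¹ by
      simp only [Matrix.mul_assoc],
      Matrix.nonsing_inv_mul W hW, Matrix.mul_one]
    simp only [Matrix.mul_assoc]


/-- long products of simultaneously block-diagonalized stability
matrices converge geometrically to the rank-one projector `1·(1ᵀA)`.
Here `s = n + 2 ≥ 2`. -/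
theorem stmt13 (n : ℕ) (A W : Matrix (Fin (n + 2)) (Fin (n + 2)) ℝ)
    (hW : IsUnit W.det)
    (hWe : W *ᵥ Pi.single (0 : Fin (n + 2)) 1 = fun _ => (1 : ℝ))
    (hAW : ((fun _ => (1 : ℝ)) ᵥ* A) ᵥ* W = Pi.single (0 : Fin (n + 2)) 1)
    (γ : ℝ) (hγ0 : 0 ≤ γ) (hγ1 : γ < 1)
    (r : ℕ) (hr : 1 ≤ r) (M : Fin r → Matrix (Fin (n + 2)) (Fin (n + 2)) ℝ)
    (hrow : ∀ j, (W⁻¹ * M j * W) 0 = Pi.single (0 : Fin (n + 2)) 1)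
    (hcol : ∀ j, (fun i => (W⁻¹ * M j * W) i 0) = Pi.single (0 : Fin (n + 2)) 1)
    (hblk : ∀ j, rowNormInf ((W⁻¹ * M j * W).submatrix Fin.succ Fin.succ) ≤ γ) :
    rowNormInf ((List.ofFn M).reverse.prod
        - vecMulVec (fun _ => (1 : ℝ)) ((fun _ => (1 : ℝ)) ᵥ* A))
      ≤ rowNormInf W * rowNormInf W⁻¹ * γ ^ r := by

  set D : Fin r → Matrix (Fin (n+2)) (Fin (n+2)) ℝ := fun j => W⁻¹ * M j * W with hD
  set L : List (Matrix (Fin (n+2)) (Fin (n+2)) ℝ) := (List.ofFn D).reverse with hL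
  have hmem : ∀ X ∈ L, ∃ j, X = D j := by
    intro X hX
    rw [hL, List.mem_reverse, List.mem_ofFn] at hX
    obtain ⟨j, hj⟩ := hX
    exact ⟨j, hj.symm⟩
  obtain ⟨hPr, hPc, hPb⟩ := prod_struct γ hγ0 L
    (fun X hX => by obtain ⟨j, rfl⟩ := hmem X hX; exact hrow j)
    (fun X hX => by obtain ⟨j, rfl⟩ := hmem X hX; exact hcol j)
    (fun X hX => by obtain ⟨j, rfl⟩ := hmem X hX; exact hblk j)
  have hlen : L.length = r := by simp [hL]
  -- product of Ms equals W * L.prod * W⁻¹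
  have hMD : ∀ j, M j = W * D j * W⁻¹ := by
    intro j
    rw [hD]
    simp only [Matrix.mul_assoc]
    rw [Matrix.mul_nonsing_inv_cancel_left W _ hW]
    rw [show M j * (W * W⁻¹) = M j * (W * W⁻¹) from rfl, Matrix.mul_nonsing_inv W hW,
      Matrix.mul_one]
  have hprod : (List.ofFn M).reverse.prod = W * L.prod * W⁻¹ := by
    rw [← conj_prod W hW L]
    congr 1
    have h1 : List.ofFn M = List.map (fun X => W * X * W⁻¹) (List.ofFn D) := by
      rw [List.map_ofFn]
      congr 1
      funext j
      exact hMD j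
    rw [hL, h1]
    simp [List.map_reverse]
  -- the projector equals W * E * W⁻¹
  set E : Matrix (Fin (n+2)) (Fin (n+2)) ℝ :=
    vecMulVec (Pi.single 0 1) (Pi.single 0 1) with hE
  have hW0 : ∀ i, W i 0 = 1 := by
    intro i
    have := congrFun hWe i
    simpa [Matrix.mulVec, dotProduct, Pi.single_apply] using this
  have h1A : ((fun _ => (1 : ℝ)) ᵥ* A) = Pi.single (0 : Fin (n+2)) 1 ᵥ* W⁻¹ := by
    have : ((fun _ => (1 : ℝ)) ᵥ* A) ᵥ* (W * W⁻¹) = ((fun _ => (1:ℝ)) ᵥ* A) ᵥ* (1 : Matrix (Fin (n+2)) (Fin (n+2)) ℝ) := by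
      rw [Matrix.mul_nonsing_inv W hW]
    rw [Matrix.vecMul_one] at this
    rw [← this, ← Matrix.vecMul_vecMul, hAW]
  have hproj : vecMulVec (fun _ => (1 : ℝ)) ((fun _ => (1 : ℝ)) ᵥ* A) = W * E * W⁻¹ := by
    ext i j
    rw [Matrix.vecMulVec_apply, h1A]
    have hr1 : (Pi.single (0 : Fin (n+2)) (1:ℝ) ᵥ* W⁻¹) j = W⁻¹ 0 j := by
      simp [Matrix.vecMul, dotProduct, Pi.single_apply]
    have hr2 : (W * E * W⁻¹) i j = W i 0 * W⁻¹ 0 j := by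
      simp only [Matrix.mul_apply, hE, Matrix.vecMulVec_apply, Pi.single_apply]
      simp [Finset.sum_ite_eq', mul_ite, ite_mul, Finset.mul_sum, Finset.sum_mul]
    rw [hr1, hr2, hW0 i, one_mul]
  -- the difference
  have hdiff : (List.ofFn M).reverse.prod
      - vecMulVec (fun _ => (1 : ℝ)) ((fun _ => (1 : ℝ)) ᵥ* A)
      = W * (L.prod - E) * W⁻¹ := by
    rw [hprod, hproj, Matrix.mul_sub, Matrix.sub_mul]
  rw [hdiff]
  -- bound on the middle factor
  have hZ : rowNormInf (L.prod - E) ≤ γ ^ r := by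
    apply rowNormInf_le
    intro i
    induction i using Fin.cases with
    | zero =>
      have : ∀ j, (L.prod - E) 0 j = 0 := by
        intro j
        simp only [Matrix.sub_apply, hE, Matrix.vecMulVec_apply]
        rw [congrFun hPr j]
        simp [Pi.single_apply]
      simp only [this, abs_zero, Finset.sum_const_zero]
      positivity
    | succ i =>
      have hcol0 : (L.prod - E) i.succ 0 = 0 := by
        simp only [Matrix.sub_apply, hE, Matrix.vecMulVec_apply]
        rw [congrFun hPc i.succ]
        simp [Pi.single_apply, Fin.succ_ne_zero]
      have hrest : ∀ j : Fin (n+1), (L.prod - E) i.succ j.succ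
          = (L.prod.submatrix Fin.succ Fin.succ) i j := by
        intro j
        simp [Matrix.sub_apply, hE, Matrix.vecMulVec_apply, Pi.single_apply,
          Fin.succ_ne_zero]
      calc ∑ j, |(L.prod - E) i.succ j|
          = |(L.prod - E) i.succ 0| + ∑ j : Fin (n+1), |(L.prod - E) i.succ j.succ| :=
            Fin.sum_univ_succ _
        _ = ∑ j : Fin (n+1), |(L.prod.submatrix Fin.succ Fin.succ) i j| := by
            rw [hcol0, abs_zero, zero_add]
            exact Finset.sum_congr rfl fun j _ => by rw [hrest j]
        _ ≤ rowNormInf (L.prod.submatrix Fin.succ Fin.succ) := row_le_rowNormInf _ i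
        _ ≤ γ ^ r := by rw [← hlen]; exact hPb
  -- assemble
  calc rowNormInf (W * (L.prod - E) * W⁻¹)
      ≤ rowNormInf (W * (L.prod - E)) * rowNormInf W⁻¹ := rowNormInf_mul_le _ _
    _ ≤ rowNormInf W * rowNormInf (L.prod - E) * rowNormInf W⁻¹ :=
        mul_le_mul_of_nonneg_right (rowNormInf_mul_le _ _) (rowNormInf_nonneg _)
    _ ≤ rowNormInf W * γ ^ r * rowNormInf W⁻¹ := by
        apply mul_le_mul_of_nonneg_right _ (rowNormInf_nonneg _)
        exact mul_le_mul_of_nonneg_left hZ (rowNormInf_nonneg _)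
    _ = rowNormInf W * rowNormInf W⁻¹ * γ ^ r := by ring
end
end

section
/- Let c₁, …, c₄ ∈ ℝ be pairwise distinct, let V₄ ∈ ℝ^{4×4} be the Vandermonde matrix with entries (V₄)_{i,j} = c_i^{j−1}, and let v₁ ∈ ℝ⁴ be defined by v₁ᵀ = 6·e₄ᵀ·V₄^{-1}. Let y : ℝ → ℝ be four times continuously differentiable, t ∈ ℝ and h₀ > 0. Then there exists C > 0 such that for every h with 0 < h ≤ h₀: |Σ_{i=1}^{4} (v₁)_i · y(t + c_i h) − h³·y‴(t)| ≤ C·h⁴. -/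
open Matrix BigOperators

private lemma hasDerivAt_affine (t c s : ℝ) : HasDerivAt (fun u : ℝ => t + c * u) c s := by
  simpa using ((hasDerivAt_id s).const_mul c).const_add t

private lemma iteratedDeriv_affine (y : ℝ → ℝ) (hy : ContDiff ℝ 4 y) (c t : ℝ) :
    ∀ n : ℕ, n ≤ 4 → ∀ s : ℝ,
      iteratedDeriv n (fun u => y (t + c * u)) s = c ^ n * iteratedDeriv n y (t + c * s) := by
  intro n
  induction n with
  | zero => intro _ s; simp
  | succ n ih =>
    intro hn s
    have hn' : n ≤ 4 := le_of_lt (Nat.lt_of_succ_le hn)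
    have hdiff : Differentiable ℝ (iteratedDeriv n y) :=
      hy.differentiable_iteratedDeriv n (by exact_mod_cast Nat.lt_of_succ_le hn)
    rw [iteratedDeriv_succ]
    have heq : iteratedDeriv n (fun u => y (t + c * u))
        = fun u => c ^ n * iteratedDeriv n y (t + c * u) := funext (ih hn')
    rw [heq]
    have h1 : HasDerivAt (fun u => iteratedDeriv n y (t + c * u))
        (deriv (iteratedDeriv n y) (t + c * s) * c) s :=
      by have := ((hdiff (t + c * s)).hasDerivAt).comp s (hasDerivAt_affine t c s); exact this
    have h2 : HasDerivAt (fun u => c ^ n * iteratedDeriv n y (t + c * u))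
        (c ^ n * (deriv (iteratedDeriv n y) (t + c * s) * c)) s := h1.const_mul _
    rw [h2.deriv, iteratedDeriv_succ]
    ring

private lemma iterDW (g : ℝ → ℝ) (hg : ContDiff ℝ 4 g) {a b : ℝ} (hab : a < b) {k : ℕ}
    (hk : k ≤ 4) {x : ℝ} (hx : x ∈ Set.Icc a b) :
    iteratedDerivWithin k g (Set.Icc a b) x = iteratedDeriv k g x := by
  have h0 : HasFTaylorSeriesUpTo 4 g (ftaylorSeries ℝ g) := contDiff_iff_ftaylorSeries.mp hg
  have h1 : ftaylorSeries ℝ g x k = iteratedFDerivWithin ℝ k g (Set.Icc a b) x :=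
    (h0.hasFTaylorSeriesUpToOn (Set.Icc a b)).eq_iteratedFDerivWithin_of_uniqueDiffOn
      (by exact_mod_cast hk) (uniqueDiffOn_Icc hab) hx
  rw [iteratedDerivWithin_eq_iteratedFDerivWithin, iteratedDeriv_eq_iteratedFDeriv, ← h1]
  rfl

/-- the error estimator weight vector `v₁ᵀ = 6·e₄ᵀ·V₄⁻¹` extracts
`h³·y'''(t) + O(h⁴)` from the stage values `y(t + cᵢh)`. -/
theorem stmt14 (c : Fin 4 → ℝ) (hc : Function.Injective c)
    (v1 : Fin 4 → ℝ)
    (hv1 : v1 = (6 : ℝ) • (Pi.single (3 : Fin 4) 1 ᵥ* (Matrix.vandermonde c)⁻¹))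
    (y : ℝ → ℝ) (hy : ContDiff ℝ 4 y) (t h0 : ℝ) (hh0 : 0 < h0) :
    ∃ C > 0, ∀ h : ℝ, 0 < h → h ≤ h0 →
      |(∑ i, v1 i * y (t + c i * h)) - h ^ 3 * iteratedDeriv 3 y t| ≤ C * h ^ 4 := by
  -- moment conditions
  have hdet : (Matrix.vandermonde c).det ≠ 0 := Matrix.det_vandermonde_ne_zero_iff.mpr hc
  have hVV : (Matrix.vandermonde c)⁻¹ * Matrix.vandermonde c = 1 :=
    Matrix.nonsing_inv_mul _ (isUnit_iff_ne_zero.mpr hdet)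
  have hmul : v1 ᵥ* Matrix.vandermonde c = (6 : ℝ) • (Pi.single (3 : Fin 4) 1 : Fin 4 → ℝ) := by
    rw [hv1, Matrix.smul_vecMul, Matrix.vecMul_vecMul, hVV, Matrix.vecMul_one]
  have hmom : ∀ j : Fin 4, ∑ i, v1 i * c i ^ (j : ℕ) = if j = 3 then 6 else 0 := by
    intro j
    have := congrFun hmul j
    simp only [Matrix.vecMul, dotProduct, Matrix.vandermonde_apply, Pi.smul_apply,
      smul_eq_mul] at this
    rw [this]
    by_cases hj : j = 3 <;> simp [hj, Pi.single_apply]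
  -- the stage functions
  set g : Fin 4 → ℝ → ℝ := fun i u => y (t + c i * u) with hg
  have hgc : ∀ i, ContDiff ℝ 4 (g i) := by
    intro i
    exact hy.comp (contDiff_const.add (contDiff_const.mul contDiff_id))
  -- bound on fourth derivative
  have hcont : ∀ i, ContinuousOn (fun u => iteratedDeriv 4 y (t + c i * u)) (Set.Icc 0 h0) := by
    intro i
    exact ((hy.continuous_iteratedDeriv 4 le_rfl).comp
      (continuous_const.add (continuous_const.mul continuous_id))).continuousOn
  have hMex : ∀ i : Fin 4, ∃ M : ℝ, ∀ u ∈ Set.Icc (0:ℝ) h0,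
      ‖iteratedDeriv 4 y (t + c i * u)‖ ≤ M := fun i =>
    isCompact_Icc.exists_bound_of_continuousOn (hcont i)
  choose M hM using hMex
  have hMnonneg : ∀ i, 0 ≤ M i := by
    intro i
    exact le_trans (norm_nonneg _) (hM i 0 ⟨le_refl 0, hh0.le⟩)
  -- the constant
  set C : ℝ := 1 + ∑ i, |v1 i| * (|c i| ^ 4 * M i) / 6 with hC
  have hCpos : 0 < C := by
    have : (0:ℝ) ≤ ∑ i, |v1 i| * (|c i| ^ 4 * M i) / 6 := by
      apply Finset.sum_nonneg
      intro i _
      apply div_nonneg _ (by norm_num)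
      exact mul_nonneg (abs_nonneg _) (mul_nonneg (by positivity) (hMnonneg i))
    rw [hC]; linarith
  refine ⟨C, hCpos, fun h hh hhh0 => ?_⟩
  have hIcc : h ∈ Set.Icc (0:ℝ) h0 := ⟨hh.le, hhh0⟩
  have h0Icc : (0:ℝ) ∈ Set.Icc (0:ℝ) h0 := ⟨le_refl 0, hh0.le⟩
  -- Taylor's theorem for each stage
  have hrem : ∀ i : Fin 4, ‖g i h - taylorWithinEval (g i) 3 (Set.Icc 0 h0) 0 h‖ ≤
      (|c i| ^ 4 * M i) * (h - 0) ^ 4 / (3:ℕ).factorial := by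
    intro i
    apply taylor_mean_remainder_bound hh0.le ((hgc i).contDiffOn) hIcc
    intro u hu
    rw [iterDW (g i) (hgc i) hh0 (by norm_num) hu]
    rw [iteratedDeriv_affine y hy (c i) t 4 le_rfl u]
    rw [norm_mul]
    have : ‖(c i) ^ 4‖ = |c i| ^ 4 := by
      rw [Real.norm_eq_abs, abs_pow]
    rw [this]
    exact mul_le_mul_of_nonneg_left (hM i u hu) (by positivity)
  -- Taylor polynomial value
  have hT : ∀ i : Fin 4, taylorWithinEval (g i) 3 (Set.Icc 0 h0) 0 h
      = ∑ k ∈ Finset.range 4, h ^ k / (k.factorial : ℝ) * (c i ^ k * iteratedDeriv k y t) := by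
    intro i
    rw [taylor_within_apply]
    apply Finset.sum_congr rfl
    intro k hk
    have hk4 : k ≤ 4 := by
      have := Finset.mem_range.mp hk
      exact_mod_cast Nat.le_of_lt_succ (by omega)
    rw [iterDW (g i) (hgc i) hh0 hk4 h0Icc,
      iteratedDeriv_affine y hy (c i) t k hk4 0]
    simp only [smul_eq_mul, sub_zero, mul_zero, add_zero]
    ring
  -- sum of Taylor polynomials
  have hsumT : ∑ i, v1 i * taylorWithinEval (g i) 3 (Set.Icc 0 h0) 0 h
      = h ^ 3 * iteratedDeriv 3 y t := by
    simp only [hT, Finset.mul_sum]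
    rw [Finset.sum_comm]
    have hswap : ∀ k ∈ Finset.range 4,
        ∑ i : Fin 4, v1 i * (h ^ k / (k.factorial : ℝ) * (c i ^ k * iteratedDeriv k y t))
        = h ^ k / (k.factorial : ℝ) * iteratedDeriv k y t * ∑ i, v1 i * c i ^ k := by
      intro k _
      rw [Finset.mul_sum]
      apply Finset.sum_congr rfl
      intro i _
      ring
    rw [Finset.sum_congr rfl hswap]
    have mm : ∀ k : ℕ, ∀ hk : k < 4, ∑ i, v1 i * c i ^ k = if k = 3 then 6 else 0 := by
      intro k hk
      have h1 := hmom ⟨k, hk⟩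
      have h2 : ((⟨k, hk⟩ : Fin 4) : ℕ) = k := rfl
      rw [h2] at h1
      rw [h1]
      by_cases h3 : k = 3
      · subst h3; simp
      · have h4 : (⟨k, hk⟩ : Fin 4) ≠ 3 := by
          intro hcon
          apply h3
          have := congrArg (Fin.val) hcon
          simpa using this
        simp [h4, h3]
    rw [Finset.sum_range_succ (n := 3), Finset.sum_range_succ (n := 2),
      Finset.sum_range_succ (n := 1), Finset.sum_range_succ (n := 0), Finset.sum_range_zero,
      mm 0 (by norm_num), mm 1 (by norm_num), mm 2 (by norm_num), mm 3 (by norm_num)]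
    norm_num [Nat.factorial]
    ring
  -- conclude
  have hsplit : (∑ i, v1 i * y (t + c i * h)) - h ^ 3 * iteratedDeriv 3 y t
      = ∑ i, v1 i * (g i h - taylorWithinEval (g i) 3 (Set.Icc 0 h0) 0 h) := by
    rw [← hsumT]
    rw [← Finset.sum_sub_distrib]
    apply Finset.sum_congr rfl
    intro i _
    simp [hg]
    ring
  rw [hsplit]
  calc |∑ i, v1 i * (g i h - taylorWithinEval (g i) 3 (Set.Icc 0 h0) 0 h)|
      ≤ ∑ i, |v1 i * (g i h - taylorWithinEval (g i) 3 (Set.Icc 0 h0) 0 h)| :=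
        Finset.abs_sum_le_sum_abs _ _
    _ ≤ ∑ i, |v1 i| * ((|c i| ^ 4 * M i) * h ^ 4 / 6) := by
        apply Finset.sum_le_sum
        intro i _
        rw [abs_mul]
        apply mul_le_mul_of_nonneg_left _ (abs_nonneg _)
        have := hrem i
        rw [Real.norm_eq_abs] at this
        rw [show (((3:ℕ).factorial : ℕ) : ℝ) = 6 by norm_num [Nat.factorial]] at this
        simpa using this
    _ ≤ C * h ^ 4 := by
        rw [hC, add_mul, one_mul, Finset.sum_mul]
        have heq : ∑ i, |v1 i| * ((|c i| ^ 4 * M i) * h ^ 4 / 6)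
            = ∑ i, |v1 i| * (|c i| ^ 4 * M i) / 6 * h ^ 4 := by
          apply Finset.sum_congr rfl
          intro i _
          ring
        rw [heq]
        have h4 : (0:ℝ) ≤ h ^ 4 := by positivity
        linarith
end

section
/- Let m ≥ 2. For 1 ≤ k ≤ m set ω_k = (k − 1/2)·π, ν_k = 2/√(2m + sin(2ω_k)/sin(ω_k/m)), and let v^{[k]} ∈ ℝ^m have entries v^{[k]}_i = ν_k·cos(ω_k·(2i−1)/(2m)). Then 2m + sin(2ω_k)/sin(ω_k/m) > 0 for all k, and the vectors v^{[1]}, …, v^{[m]} are orthonormal: Σ_{i=1}^{m} v^{[k]}_i · v^{[l]}_i = 1 if k = l and 0 if k ≠ l. -/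
open BigOperators Real

noncomputable section

/-- `ω_k = (k - 1/2)·π` for `1 ≤ k ≤ m` (0-indexed: `k + 1/2` for `k : Fin m`). -/
def omg (m : ℕ) (k : Fin m) : ℝ := (((k : ℕ) : ℝ) + 1/2) * Real.pi

/-- Normalization constant `ν_k = 2/√(2m + sin(2ω_k)/sin(ω_k/m))`. -/
def nuC (m : ℕ) (k : Fin m) : ℝ :=
  2 / Real.sqrt (2 * m + Real.sin (2 * omg m k) / Real.sin (omg m k / m))

/-- Normalized eigenvector `v^{[k]}_i = ν_k·cos(ω_k(2i-1)/(2m))`. -/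
def evec (m : ℕ) (k : Fin m) : Fin m → ℝ :=
  fun i => nuC m k * Real.cos (omg m k * (2 * (i : ℕ) + 1) / (2 * m))

private lemma tel (α : ℝ) (n : ℕ) :
    ∑ i ∈ Finset.range n, (2 * Real.sin (α/2) * Real.cos (α * ((i:ℝ) + 1/2))) = Real.sin (α * n) := by
  induction n with
  | zero => simp
  | succ n ih =>
    rw [Finset.sum_range_succ, ih]
    have h := Real.sin_sub_sin (α * ((n:ℝ)+1)) (α * n)
    have e1 : (α*((n:ℝ)+1) - α*n)/2 = α/2 := by ring
    have e2 : (α*((n:ℝ)+1) + α*n)/2 = α*((n:ℝ)+1/2) := by ring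
    rw [e1, e2] at h
    push_cast
    linarith

private lemma sumcos (α : ℝ) (n : ℕ) (h0 : Real.sin (α/2) ≠ 0)
    (h1 : Real.sin (α * n) = 0) :
    ∑ i ∈ Finset.range n, Real.cos (α * ((i:ℝ) + 1/2)) = 0 := by
  have h := tel α n
  rw [h1, ← Finset.mul_sum] at h
  exact (mul_eq_zero.mp h).resolve_left (mul_ne_zero two_ne_zero h0)

private lemma coscos (x y : ℝ) :
    Real.cos x * Real.cos y = (Real.cos (x - y) + Real.cos (x + y)) / 2 := by
  have h1 := Real.cos_sub x y
  have h2 := Real.cos_add x y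
  linarith

private lemma sin_ne (x : ℝ) (hx : x ≠ 0) (hx2 : |x| < Real.pi) : Real.sin x ≠ 0 := by
  simp only [ne_eq, Real.sin_eq_zero_iff_of_lt_of_lt (abs_lt.mp hx2).1 (abs_lt.mp hx2).2]
  exact hx

private lemma cross (m : ℕ) (hm : 2 ≤ m) (k l : Fin m) :
    ∑ i ∈ Finset.range m,
      Real.cos ((((k:ℕ):ℝ)+1/2) * Real.pi / m * ((i:ℝ) + 1/2)) *
      Real.cos ((((l:ℕ):ℝ)+1/2) * Real.pi / m * ((i:ℝ) + 1/2))
      = if k = l then (m:ℝ)/2 else 0 := by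
  have hmpos : (0:ℝ) < m := by positivity
  have hm0 : (m:ℝ) ≠ 0 := ne_of_gt hmpos
  set a : ℝ := (((k:ℕ):ℝ)+1/2) * Real.pi / m with ha
  set b : ℝ := (((l:ℕ):ℝ)+1/2) * Real.pi / m with hb
  have key : ∀ i : ℕ, Real.cos (a*((i:ℝ)+1/2)) * Real.cos (b*((i:ℝ)+1/2))
      = (Real.cos ((a-b)*((i:ℝ)+1/2)) + Real.cos ((a+b)*((i:ℝ)+1/2))) / 2 := by
    intro i
    rw [coscos]
    have e1 : a*((i:ℝ)+1/2) - b*((i:ℝ)+1/2) = (a-b)*((i:ℝ)+1/2) := by ring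
    have e2 : a*((i:ℝ)+1/2) + b*((i:ℝ)+1/2) = (a+b)*((i:ℝ)+1/2) := by ring
    rw [e1, e2]
  simp only [key]
  rw [show (∑ i ∈ Finset.range m,
      (Real.cos ((a-b)*((i:ℝ)+1/2)) + Real.cos ((a+b)*((i:ℝ)+1/2))) / 2)
    = ((∑ i ∈ Finset.range m, Real.cos ((a-b)*((i:ℝ)+1/2)))
      + (∑ i ∈ Finset.range m, Real.cos ((a+b)*((i:ℝ)+1/2)))) / 2 by
      rw [← Finset.sum_add_distrib, ← Finset.sum_div]]
  have hsumplus : ∑ i ∈ Finset.range m, Real.cos ((a+b)*((i:ℝ)+1/2)) = 0 := by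
    apply sumcos
    · have he : (a+b)/2 = (((k:ℕ):ℝ)+((l:ℕ):ℝ)+1) * Real.pi / (2*m) := by
        rw [ha, hb]; field_simp; ring
      rw [he]
      apply ne_of_gt
      apply Real.sin_pos_of_pos_of_lt_pi
      · positivity
      · rw [div_lt_iff₀ (by positivity)]
        have hk : ((k:ℕ):ℝ) < m := by exact_mod_cast k.isLt
        have hl : ((l:ℕ):ℝ) < m := by exact_mod_cast l.isLt
        have hk' : ((k:ℕ):ℝ)+1 ≤ m := by exact_mod_cast k.isLt
        have hl' : ((l:ℕ):ℝ)+1 ≤ m := by exact_mod_cast l.isLt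
        have hlt : ((k:ℕ):ℝ)+((l:ℕ):ℝ)+1 < 2*m := by linarith
        nlinarith [Real.pi_pos, mul_lt_mul_of_pos_right hlt Real.pi_pos]
    · have he : (a+b)*(m:ℝ) = (((k:ℕ)+(l:ℕ)+1 : ℕ):ℝ) * Real.pi := by
        rw [ha, hb]; push_cast; field_simp; ring
      rw [he, Real.sin_nat_mul_pi]
  by_cases hkl : k = l
  · subst hkl
    rw [show a - b = 0 by rw [ha, hb, sub_self]]
    simp only [sub_self, zero_mul, Real.cos_zero, Finset.sum_const, Finset.card_range,
      nsmul_eq_mul, mul_one, hsumplus, add_zero, if_true]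
  · rw [if_neg hkl]
    have hsumminus : ∑ i ∈ Finset.range m, Real.cos ((a-b)*((i:ℝ)+1/2)) = 0 := by
      apply sumcos
      · have he : (a-b)/2 = ((((k:ℕ)-(l:ℕ) : ℤ)):ℝ) * Real.pi / (2*m) := by
          rw [ha, hb]; push_cast; field_simp; ring
        rw [he]
        apply sin_ne
        · have hne : (((k:ℕ)-(l:ℕ) : ℤ)) ≠ 0 := by
            simp only [sub_ne_zero]
            exact_mod_cast fun h => hkl (Fin.ext h)
          have : ((((k:ℕ)-(l:ℕ) : ℤ)):ℝ) ≠ 0 := by exact_mod_cast hne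
          positivity
        · rw [abs_div, abs_mul, abs_of_pos Real.pi_pos, abs_of_pos (by positivity : (0:ℝ) < 2*m)]
          rw [div_lt_iff₀ (by positivity)]
          have hd : |((((k:ℕ)-(l:ℕ) : ℤ)):ℝ)| < 2*m := by
            rw [abs_lt]
            have hk : ((k:ℕ):ℝ) < m := by exact_mod_cast k.isLt
            have hl : ((l:ℕ):ℝ) < m := by exact_mod_cast l.isLt
            push_cast
            constructor <;> nlinarith
          nlinarith [Real.pi_pos]
      · have he : (a-b)*(m:ℝ) = ((((k:ℕ)-(l:ℕ) : ℤ)):ℝ) * Real.pi := by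
          rw [ha, hb]; push_cast; field_simp; ring
        rw [he, Real.sin_int_mul_pi]
    rw [hsumminus, hsumplus]
    norm_num

/-- the normalization radicands are positive and the vectors
`v^{[1]}, …, v^{[m]}` are orthonormal. -/
theorem stmt17 (m : ℕ) (hm : 2 ≤ m) :
    (∀ k : Fin m,
      0 < 2 * (m : ℝ) + Real.sin (2 * omg m k) / Real.sin (omg m k / m)) ∧
    ∀ k l : Fin m,
      (∑ i, evec m k i * evec m l i) = if k = l then 1 else 0 := by
  have hmpos : (0:ℝ) < m := by
    have : 0 < m := lt_of_lt_of_le two_pos hm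
    exact_mod_cast this
  have hm0 : (m:ℝ) ≠ 0 := ne_of_gt hmpos
  have hsin2 : ∀ k : Fin m, Real.sin (2 * omg m k) = 0 := by
    intro k
    have h : 2 * omg m k = ((2*(k:ℕ)+1 : ℕ) : ℝ) * Real.pi := by
      unfold omg; push_cast; ring
    rw [h, Real.sin_nat_mul_pi]
  have hrad : ∀ k : Fin m,
      2*(m:ℝ) + Real.sin (2*omg m k)/Real.sin (omg m k / m) = 2*m := by
    intro k; rw [hsin2 k, zero_div, add_zero]
  refine ⟨fun k => by rw [hrad k]; positivity, ?_⟩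
  intro k l
  have hnu : ∀ k : Fin m, nuC m k = 2 / Real.sqrt (2*m) := by
    intro k; unfold nuC; rw [hrad k]
  have harg : ∀ (k : Fin m) (i : ℕ), omg m k * (2*(i:ℝ)+1)/(2*(m:ℝ))
      = (((k:ℕ):ℝ)+1/2) * Real.pi / m * ((i:ℝ)+1/2) := by
    intro k i; unfold omg; field_simp
  have hstep : (∑ i, evec m k i * evec m l i)
      = ∑ i ∈ Finset.range m,
          (nuC m k * Real.cos (omg m k * (2*(i:ℝ)+1)/(2*(m:ℝ)))) *
          (nuC m l * Real.cos (omg m l * (2*(i:ℝ)+1)/(2*(m:ℝ)))) :=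
    Fin.sum_univ_eq_sum_range
      (fun i => (nuC m k * Real.cos (omg m k * (2*(i:ℝ)+1)/(2*(m:ℝ)))) *
        (nuC m l * Real.cos (omg m l * (2*(i:ℝ)+1)/(2*(m:ℝ))))) m
  rw [hstep]
  have hstep2 : ∀ i ∈ Finset.range m,
      (nuC m k * Real.cos (omg m k * (2*(i:ℝ)+1)/(2*(m:ℝ)))) *
      (nuC m l * Real.cos (omg m l * (2*(i:ℝ)+1)/(2*(m:ℝ))))
      = (2/Real.sqrt (2*m)) * (2/Real.sqrt (2*m)) *
        (Real.cos ((((k:ℕ):ℝ)+1/2) * Real.pi / m * ((i:ℝ)+1/2)) *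
         Real.cos ((((l:ℕ):ℝ)+1/2) * Real.pi / m * ((i:ℝ)+1/2))) := by
    intro i _
    rw [hnu k, hnu l, harg k i, harg l i]; ring
  rw [Finset.sum_congr rfl hstep2, ← Finset.mul_sum, cross m hm k l]
  have hs : Real.sqrt (2*(m:ℝ)) * Real.sqrt (2*(m:ℝ)) = 2*m :=
    Real.mul_self_sqrt (by positivity)
  have hsne : Real.sqrt (2*(m:ℝ)) ≠ 0 :=
    ne_of_gt (Real.sqrt_pos.mpr (by positivity))
  by_cases h : k = l
  · rw [if_pos h, if_pos h, div_mul_div_comm, hs]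
    field_simp
  · rw [if_neg h, if_neg h, mul_zero]
end
end
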